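/- arXiv:2510.13693 — 4 statements merged into one kernel-verified Lean document; each statement's English description precedes it below -/
import Mathlib

section
/- There exists h : ℕ → ℝ with h ∈ 𝔸 ∩ 𝒔 ∩ 𝔹 but h ∉ 𝔹₀; in particular, 𝔸 ∩ 𝒔 ∩ 𝔹 is not contained in 𝔹₀. -/
open Filter ENNReal
open scoped Classical

noncomputable section

/-- Coordinate projection onto a finite set of indices. -/
def proj (A : Finset ℕ) (f : ℕ → ℝ) : ℕ → ℝ := fun n => if n ∈ A then f n else 0

/-- Coordinate projection onto a set of indices. -/
def projSet (A : Set ℕ) (f : ℕ → ℝ) : ℕ → ℝ := fun n => if n ∈ A then f n else 0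

/-- `𝟙*_A(f) = ∑_{n ∈ A} f n`. -/
def oneStar (f : ℕ → ℝ) (A : Finset ℕ) : ℝ := ∑ n ∈ A, f n

/-- `A` is a greedy set of `f`. -/
def GreedySet (f : ℕ → ℝ) (A : Finset ℕ) : Prop :=
  ∀ n ∈ A, ∀ k, k ∉ A → |f k| ≤ |f n|

/-- `β(f,A) = sup_{I ∈ ℐ} |𝟙*_{I∖A}(f)| ∈ [0,∞]`, the sup running over all finite
integer intervals `I = [a,b]`. -/
def beta (f : ℕ → ℝ) (A : Finset ℕ) : ℝ≥0∞ :=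
  ⨆ a : ℕ, ⨆ b : ℕ, ENNReal.ofReal |oneStar f (Finset.Icc a b \ A)|

/-- `‖f‖_𝔹 = sup_{A ∈ 𝒢(f)} β(f,A) ∈ [0,∞]`. -/
def BNorm (f : ℕ → ℝ) : ℝ≥0∞ :=
  ⨆ A ∈ {A : Finset ℕ | GreedySet f A}, beta f A

/-- Membership in `𝔹`, i.e. `‖f‖_𝔹 < ∞`. -/
def MemB (f : ℕ → ℝ) : Prop := BNorm f < ⊤

/-- Membership in `c₀`. -/
def Memc0 (f : ℕ → ℝ) : Prop := Tendsto f atTop (nhds 0)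

/-- Membership in `𝔹₀`. -/
def MemB0 (f : ℕ → ℝ) : Prop :=
  Memc0 f ∧ ∀ ε : ℝ, 0 < ε → ∃ A : Finset ℕ, GreedySet f A ∧
    ∀ B : Finset ℕ, GreedySet f B → A ⊆ B → beta f B < ENNReal.ofReal ε

/-- The net `(𝟙*_A(f))_{A ∈ 𝒢(f)}`, directed by inclusion, converges to `s`. -/
def GreedyLim (f : ℕ → ℝ) (s : ℝ) : Prop :=
  ∀ ε : ℝ, 0 < ε → ∃ A : Finset ℕ, GreedySet f A ∧
    ∀ B : Finset ℕ, GreedySet f B → A ⊆ B → |oneStar f B - s| < ε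

/-- Membership in `𝔸`. -/
def MemA (f : ℕ → ℝ) : Prop := Memc0 f ∧ ∃ s, GreedyLim f s

/-- `σ_g(f)`, the greedy sum of `f` (junk value `0` if the greedy net does not converge). -/
def sigmaG (f : ℕ → ℝ) : ℝ := if h : ∃ s, GreedyLim f s then h.choose else 0

/-- `‖f‖_𝔸 = sup_{A ∈ 𝒢(f)} |σ_g(f) - 𝟙*_A(f)|`. -/
def ANorm (f : ℕ → ℝ) : ℝ≥0∞ :=
  ⨆ A ∈ {A : Finset ℕ | GreedySet f A}, ENNReal.ofReal |sigmaG f - oneStar f A|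

/-- The series `∑_n f n` converges (in the ordered sense) to `s`. -/
def SeriesLim (f : ℕ → ℝ) (s : ℝ) : Prop :=
  Tendsto (fun m => ∑ n ∈ Finset.range m, f n) atTop (nhds s)

/-- Membership in `𝒔`: the series `∑_n f n` converges. -/
def MemSeries (f : ℕ → ℝ) : Prop := ∃ s, SeriesLim f s

/-- `σ_s(f) = ∑_{n=0}^∞ f n` (junk value `0` if the series does not converge). -/
def sigmaS (f : ℕ → ℝ) : ℝ := if h : ∃ s, SeriesLim f s then h.choose else 0

/-- `‖f‖_𝒔 = sup_m |∑_{n = m}^∞ f n|`, expressed via `σ_s(f)` minus partial sums. -/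
def sNorm (f : ℕ → ℝ) : ℝ≥0∞ :=
  ⨆ m : ℕ, ENNReal.ofReal |sigmaS f - ∑ n ∈ Finset.range m, f n|

/-- `D(f)(m)`: the `m`-th term (for `m ≥ 1`) of the nonincreasing rearrangement of `|f|`,
as an element of `[0,∞]`. -/
def Drearr (f : ℕ → ℝ) (m : ℕ) : ℝ≥0∞ :=
  sInf {t : ℝ≥0∞ | {n : ℕ | t < ENNReal.ofReal |f n|}.Finite ∧
    {n : ℕ | t < ENNReal.ofReal |f n|}.ncard < m}

/-- `ρ_{1,∞}(f,k) = sup_{m ≥ 1} m · D(f)(m+k) ∈ [0,∞]`. Note `ρ_{1,∞}(f,0) = ‖f‖_{1,∞}`. -/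
def rho (f : ℕ → ℝ) (k : ℕ) : ℝ≥0∞ :=
  ⨆ m : ℕ, ⨆ _ : 1 ≤ m, (m : ℝ≥0∞) * Drearr f (m + k)

/-- Membership in `h_{1,∞}`: `lim_m m · D(f)(m) = 0`. -/
def Memh1inf (f : ℕ → ℝ) : Prop :=
  Tendsto (fun m : ℕ => (m : ℝ≥0∞) * Drearr f m) atTop (nhds 0)

/-- A sequence of nonempty finite integer intervals which is right-dominant:
`max J_k < min J_{k+1}` for all `k`. -/
def RightDominant (J : ℕ → Finset ℕ) : Prop :=
  (∀ k : ℕ, ∃ a b : ℕ, a ≤ b ∧ J k = Finset.Icc a b) ∧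
  ∀ k : ℕ, ∀ n ∈ J k, ∀ m ∈ J (k + 1), n < m

/-- `g` is Leibnizian with admissible sequence `J`. -/
def Admissible (g : ℕ → ℝ) (J : ℕ → Finset ℕ) : Prop :=
  RightDominant J ∧
  (∀ n : ℕ, g n ≠ 0 → ∃ k, n ∈ J k) ∧
  (∀ k : ℕ, oneStar g (J (k + 1)) ≤ oneStar g (J k)) ∧
  (∀ k : ℕ, ∀ n ∈ J k, g n ≠ 0 → ∀ m ∈ J (k + 1), g m < g n)

end

/-!
Let `w` be a positive, strictly decreasing weight on the nodes of the infinite binary tree that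
is additive over children, `w q = w (2q+1) + w (2q+2)`; a suitable perturbation of
`2 ^ (-depth)` does it. Take `h = w 0, -w 0, w 1, w 2, -w 1, w 3, w 4, -w 2, …`,
i.e. `w 0` followed by the triples `-w t, w (2t+1), w (2t+2)`. Every weight occurs exactly
twice, with opposite signs, so every greedy set differs from a set with vanishing `h`-sum by
at most two terms of size `w q → 0`; hence `σ_g(h) = 0`. The partial sums of `h` after each
triple equal `w 0`, and partial sums of `h` restricted to the nodes below `Q` stay bounded
because only the triples cut by `Q` (two tree levels) contribute; this gives `𝒔` and `𝔹`.
But removing from `h` the nodes of depth `≤ k` leaves the positive copies of the nodes of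
depth `k + 1` next to each other, and they sum to `w 0`, so `h ∉ 𝔹₀`.
-/

section GreedyBasics

open Finset

variable {f : ℕ → ℝ}

lemma abs_sum_Ico_le_of_abs_sum_range_le {M : ℝ} (hM : ∀ P, |∑ n ∈ range P, f n| ≤ M)
    (a b : ℕ) : |∑ n ∈ Ico a b, f n| ≤ 2 * M := by
  rcases le_total a b with hab | hba
  · rw [sum_Ico_eq_sub f hab]
    linarith [abs_sub (∑ n ∈ range b, f n) (∑ n ∈ range a, f n), hM a, hM b]
  · rw [Ico_eq_empty_of_le hba, sum_empty, abs_zero]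
    linarith [(abs_nonneg _).trans (hM 0)]

lemma abs_sum_range_le_of_three_mul_add_one {M C : ℝ} (hf : ∀ n, |f n| ≤ M)
    (hC : ∀ m, |∑ n ∈ range (3 * m + 1), f n| ≤ C) (P : ℕ) :
    |∑ n ∈ range P, f n| ≤ C + 2 * M := by
  have hM : 0 ≤ M := (abs_nonneg _).trans (hf 0)
  have hC0 : 0 ≤ C := (abs_nonneg _).trans (hC 0)
  obtain rfl | ⟨m, rfl | rfl | rfl⟩ :
      P = 0 ∨ ∃ m, P = 3 * m + 1 ∨ P = 3 * m + 1 + 1 ∨ P = 3 * m + 1 + 1 + 1 := by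
    rcases P with _ | P
    · exact .inl rfl
    · exact .inr ⟨P / 3, by omega⟩
  · simp only [range_zero, sum_empty, abs_zero]
    linarith
  · linarith [hC m]
  · rw [sum_range_succ]
    linarith [abs_add_le (∑ n ∈ range (3 * m + 1), f n) (f (3 * m + 1)), hC m, hf (3 * m + 1)]
  · rw [sum_range_succ, sum_range_succ]
    linarith [abs_add_le (∑ n ∈ range (3 * m + 1), f n) (f (3 * m + 1)),
      abs_add_le (∑ n ∈ range (3 * m + 1), f n + f (3 * m + 1)) (f (3 * m + 1 + 1)),
      hC m, hf (3 * m + 1), hf (3 * m + 1 + 1)]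

lemma oneStar_Icc_sdiff (A : Finset ℕ) (a b : ℕ) :
    oneStar f (Icc a b \ A) =
      ∑ n ∈ Ico a (b + 1), f n - ∑ n ∈ Ico a (b + 1), proj A f n := by
  rw [oneStar, ← Ico_add_one_right_eq_Icc, ← sum_inter_add_sum_sdiff (Ico a (b + 1)) A f]
  simp only [proj, sum_ite_mem]
  ring

lemma beta_le_ofReal {A : Finset ℕ} {C : ℝ} (hC : ∀ a b, |oneStar f (Icc a b \ A)| ≤ C) :
    beta f A ≤ ENNReal.ofReal C :=
  iSup₂_le fun a b => ENNReal.ofReal_le_ofReal (hC a b)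

lemma memB_of_forall_greedySet {C : ℝ}
    (hC : ∀ A, GreedySet f A → ∀ a b, |oneStar f (Icc a b \ A)| ≤ C) : MemB f :=
  (iSup₂_le fun A hA => beta_le_ofReal (hC A hA)).trans_lt ENNReal.ofReal_lt_top

lemma not_memB0_of_forall_greedySet {ε : ℝ} (hε : 0 < ε)
    (H : ∀ A, GreedySet f A →
      ∃ B, GreedySet f B ∧ A ⊆ B ∧ ∃ a b, ε ≤ |oneStar f (Icc a b \ B)|) :
    ¬ MemB0 f := by
  rintro ⟨-, hB0⟩
  obtain ⟨A, hA, hsmall⟩ := hB0 ε hε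
  obtain ⟨B, hB, hAB, a, b, hab⟩ := H A hA
  refine (hsmall B hB hAB).not_ge ?_
  exact (ENNReal.ofReal_le_ofReal hab).trans (le_iSup₂_of_le (f := fun a b =>
    ENNReal.ofReal |oneStar f (Icc a b \ B)|) a b le_rfl)

end GreedyBasics

namespace GreedyCounterexample

open Finset

/-- The depth of `q` in the infinite binary tree in which `q` has children `2q+1` and `2q+2`. -/
def depth (q : ℕ) : ℕ := Nat.log 2 (q + 1)

/-- A perturbation of `2 ^ (-depth q)`: still additive over children, but strictly decreasing. -/
noncomputable def weight (q : ℕ) : ℝ := (10 * 2 ^ depth q - (2 * q + 3)) / (8 * 4 ^ depth q)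

lemma pow_depth_le (q : ℕ) : 2 ^ depth q ≤ q + 1 :=
  Nat.pow_log_le_self 2 q.succ_ne_zero

lemma lt_two_mul_pow_depth (q : ℕ) : q + 1 < 2 * 2 ^ depth q := by
  have := Nat.lt_pow_succ_log_self (b := 2) (by norm_num) (q + 1)
  rw [pow_succ] at this
  unfold depth
  omega

lemma cast_lt_two_mul_pow_depth (q : ℕ) : (q : ℝ) + 1 < 2 * 2 ^ depth q := by
  exact_mod_cast lt_two_mul_pow_depth q

lemma depth_children (q : ℕ) :
    depth (2 * q + 1) = depth q + 1 ∧ depth (2 * q + 2) = depth q + 1 := by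
  have h1 := pow_depth_le q
  have h2 := lt_two_mul_pow_depth q
  constructor <;>
  exact Nat.log_eq_of_pow_le_of_lt_pow (by rw [pow_succ]; omega) (by rw [pow_succ]; omega)

lemma weight_pos (q : ℕ) : 0 < weight q := by
  have := cast_lt_two_mul_pow_depth q
  unfold weight
  apply div_pos <;> [linarith; positivity]

lemma weight_le (q : ℕ) : weight q ≤ 5 / 2 * (1 / ((q : ℝ) + 1)) := by
  have := cast_lt_two_mul_pow_depth q
  have h4 : (4 : ℝ) ^ depth q = 2 ^ depth q * 2 ^ depth q := by
    rw [← mul_pow]; norm_num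
  rw [weight, h4, mul_one_div, div_le_div_iff₀ (by positivity) (by positivity)]
  nlinarith [one_le_pow₀ (M₀ := ℝ) (a := 2) (n := depth q) (by norm_num)]

lemma weight_eq_add_children (q : ℕ) : weight q = weight (2 * q + 1) + weight (2 * q + 2) := by
  rw [weight, weight, weight, (depth_children q).1, (depth_children q).2, pow_succ, pow_succ]
  field_simp
  push_cast
  ring

lemma weight_succ_lt (q : ℕ) : weight (q + 1) < weight q := by
  have h1 := pow_depth_le q
  have h2 := lt_two_mul_pow_depth q
  have hx : (1 : ℝ) ≤ 2 ^ depth q := one_le_pow₀ (by norm_num)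
  rcases (show q + 2 ≤ 2 * 2 ^ depth q by omega).lt_or_eq with hlt | heq
  · have hd : depth (q + 1) = depth q :=
      Nat.log_eq_of_pow_le_of_lt_pow (by omega) (by rw [pow_succ]; omega)
    rw [weight, weight, hd, div_lt_div_iff₀ (by positivity) (by positivity)]
    push_cast
    nlinarith [pow_pos (show (0 : ℝ) < 4 by norm_num) (depth q)]
  · have hd : depth (q + 1) = depth q + 1 := by
      rw [depth, show q + 1 + 1 = 2 ^ (depth q + 1) by rw [pow_succ]; omega,
        Nat.log_pow (by norm_num)]
    have hq : (q : ℝ) + 2 = 2 * 2 ^ depth q := by exact_mod_cast heq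
    rw [weight, weight, hd, div_lt_div_iff₀ (by positivity) (by positivity), pow_succ, pow_succ]
    push_cast
    nlinarith [pow_pos (show (0 : ℝ) < 4 by norm_num) (depth q)]

lemma weight_strictAnti : StrictAnti weight := strictAnti_nat_of_succ_lt weight_succ_lt

lemma weight_antitone : Antitone weight := weight_strictAnti.antitone

lemma weight_le_weight_zero (q : ℕ) : weight q ≤ weight 0 := weight_antitone q.zero_le

lemma tendsto_weight : Tendsto weight atTop (nhds 0) := by
  refine squeeze_zero (fun q => (weight_pos q).le) weight_le ?_
  simpa using (tendsto_one_div_add_atTop_nhds_zero_nat (𝕜 := ℝ)).const_mul (5 / 2)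

lemma sum_Ico_weight_children (a b : ℕ) :
    ∑ t ∈ Ico a b, (weight (2 * t + 1) + weight (2 * t + 2)) =
      ∑ t ∈ Ico (2 * a + 1) (2 * b + 1), weight t := by
  induction b with
  | zero => simp
  | succ b ih =>
    rcases le_or_gt a b with hab | hab
    · rw [sum_Ico_succ_top hab, show 2 * (b + 1) + 1 = 2 * b + 1 + 1 + 1 by ring,
        sum_Ico_succ_top (by omega), sum_Ico_succ_top (by omega), ih]
      ring
    · rw [Ico_eq_empty (by omega), Ico_eq_empty (by omega), sum_empty, sum_empty]

/-- The nodes of depth `k` are `2 ^ k - 1, …, 2 ^ (k + 1) - 2`. -/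
lemma sum_weight_depth (k : ℕ) :
    ∑ t ∈ Ico (2 ^ k - 1) (2 ^ (k + 1) - 1), weight t = weight 0 := by
  induction k with
  | zero => simp
  | succ k ih =>
    have := Nat.one_le_two_pow (n := k)
    rw [show 2 ^ (k + 1) - 1 = 2 * (2 ^ k - 1) + 1 by rw [pow_succ]; omega,
      show 2 ^ (k + 1 + 1) - 1 = 2 * (2 ^ (k + 1) - 1) + 1 by rw [pow_succ 2 (k + 1)]; omega,
      ← sum_Ico_weight_children, ← ih]
    exact sum_congr rfl fun t _ => (weight_eq_add_children t).symm

lemma sum_Ico_weight_le {a b : ℕ} (hb : b ≤ 2 * a + 2) :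
    ∑ t ∈ Ico a b, weight t ≤ 2 * weight 0 := by
  have h1 := pow_depth_le a
  have h2 := lt_two_mul_pow_depth a
  set d := depth a
  have hd : 2 ^ (d + 1) = 2 * 2 ^ d := pow_succ' 2 d
  have hd' : 2 ^ (d + 1 + 1) = 4 * 2 ^ d := by rw [pow_succ, hd]; ring
  calc ∑ t ∈ Ico a b, weight t ≤ ∑ t ∈ Ico (2 ^ d - 1) (2 ^ (d + 1 + 1) - 1), weight t :=
        sum_le_sum_of_subset_of_nonneg (Ico_subset_Ico (by omega) (by omega))
          fun t _ _ => (weight_pos t).le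
    _ = 2 * weight 0 := by
        rw [← sum_Ico_consecutive weight (n := 2 ^ (d + 1) - 1) (by omega) (by omega),
          sum_weight_depth, sum_weight_depth]
        ring

/-- Node `q` sits at positions `3q+1` (with sign `-`) and `(3q+1)/2` (with sign `+`);
see `node_eq_iff`. -/
def node (n : ℕ) : ℕ := if n % 3 = 1 then n / 3 else 2 * n / 3

noncomputable def signedSeq (n : ℕ) : ℝ :=
  if n % 3 = 1 then -weight (node n) else weight (node n)

lemma node_eq_iff {n q : ℕ} : node n = q ↔ n = 3 * q + 1 ∨ n = (3 * q + 1) / 2 := by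
  unfold node
  split_ifs <;> omega

lemma div_three_le_node (n : ℕ) : n / 3 ≤ node n := by
  unfold node
  split_ifs <;> omega

lemma tendsto_node : Tendsto node atTop atTop :=
  tendsto_atTop_mono div_three_le_node (Nat.tendsto_div_const_atTop three_ne_zero)

lemma node_three_mul_add_one (t : ℕ) : node (3 * t + 1) = t := node_eq_iff.2 (.inl rfl)

lemma node_three_mul_add_two (t : ℕ) : node (3 * t + 2) = 2 * t + 1 :=
  node_eq_iff.2 (.inr (by omega))

lemma node_three_mul_add_three (t : ℕ) : node (3 * t + 3) = 2 * t + 2 :=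
  node_eq_iff.2 (.inr (by omega))

lemma signedSeq_three_mul_add_one (q : ℕ) : signedSeq (3 * q + 1) = -weight q := by
  rw [signedSeq, if_pos (by omega), node_three_mul_add_one]

lemma signedSeq_three_mul_add_one_div_two (q : ℕ) : signedSeq ((3 * q + 1) / 2) = weight q := by
  rw [signedSeq, if_neg (by omega), node_eq_iff.2 (.inr rfl)]

lemma signedSeq_zero : signedSeq 0 = weight 0 := signedSeq_three_mul_add_one_div_two 0

lemma signedSeq_three_mul_add_two (t : ℕ) : signedSeq (3 * t + 2) = weight (2 * t + 1) := by
  rw [signedSeq, if_neg (by omega), node_three_mul_add_two]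

lemma signedSeq_three_mul_add_three (t : ℕ) : signedSeq (3 * t + 3) = weight (2 * t + 2) := by
  rw [signedSeq, if_neg (by omega), node_three_mul_add_three]

lemma abs_signedSeq (n : ℕ) : |signedSeq n| = weight (node n) := by
  unfold signedSeq
  split_ifs <;> simp [abs_of_pos (weight_pos _)]

lemma memc0_signedSeq : Memc0 signedSeq :=
  squeeze_zero_norm (fun n => (Real.norm_eq_abs _).trans_le (abs_signedSeq n).le)
    (tendsto_weight.comp tendsto_node)

lemma sum_range_three_mul_add_one (m : ℕ) :
    ∑ n ∈ range (3 * m + 1), signedSeq n = weight 0 := by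
  induction m with
  | zero => simp [signedSeq_zero]
  | succ m ih =>
    rw [show 3 * (m + 1) + 1 = 3 * m + 1 + 1 + 1 + 1 by ring, sum_range_succ, sum_range_succ,
      sum_range_succ, ih, signedSeq_three_mul_add_one, signedSeq_three_mul_add_two,
      signedSeq_three_mul_add_three, weight_eq_add_children m]
    ring

lemma abs_sum_range_sub_weight_zero_le (P : ℕ) :
    |∑ n ∈ range P, signedSeq n - weight 0| ≤ weight ((P - 1) / 3) := by
  have hw := weight_pos
  obtain rfl | ⟨m, rfl | rfl | rfl⟩ :
      P = 0 ∨ ∃ m, P = 3 * m + 1 ∨ P = 3 * m + 1 + 1 ∨ P = 3 * m + 1 + 1 + 1 := by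
    rcases P with _ | P
    · exact .inl rfl
    · exact .inr ⟨P / 3, by omega⟩
  · simp [abs_of_pos (hw 0)]
  · rw [sum_range_three_mul_add_one, sub_self, abs_zero]
    exact (hw _).le
  · rw [sum_range_succ, sum_range_three_mul_add_one, signedSeq_three_mul_add_one,
      show (3 * m + 1 + 1 - 1) / 3 = m by omega]
    simp [abs_of_pos (hw m)]
  · rw [sum_range_succ, sum_range_succ, sum_range_three_mul_add_one, signedSeq_three_mul_add_one,
      show 3 * m + 1 + 1 = 3 * m + 2 by ring, signedSeq_three_mul_add_two,
      show (3 * m + 2 + 1 - 1) / 3 = m by omega,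
      show weight 0 + -weight m + weight (2 * m + 1) - weight 0 = -weight (2 * m + 2) by
        linarith [weight_eq_add_children m], abs_neg, abs_of_pos (hw _)]
    exact weight_antitone (by omega)

lemma seriesLim_signedSeq : SeriesLim signedSeq (weight 0) := by
  rw [SeriesLim, ← tendsto_sub_nhds_zero_iff]
  refine squeeze_zero_norm (fun P => ?_) (tendsto_weight.comp
    ((Nat.tendsto_div_const_atTop three_ne_zero).comp (tendsto_sub_atTop_nat 1)))
  exact (Real.norm_eq_abs _).trans_le (abs_sum_range_sub_weight_zero_le P)

lemma abs_sum_range_signedSeq_le (P : ℕ) : |∑ n ∈ range P, signedSeq n| ≤ 2 * weight 0 := by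
  have := abs_sum_range_sub_weight_zero_le P
  have := weight_le_weight_zero ((P - 1) / 3)
  have := abs_sub_abs_le_abs_sub (∑ n ∈ range P, signedSeq n) (weight 0)
  rw [abs_of_pos (weight_pos 0)] at this
  linarith

def posLT (Q : ℕ) : Finset ℕ := (range (3 * Q + 1)).filter (node · < Q)

lemma mem_posLT {n Q : ℕ} : n ∈ posLT Q ↔ node n < Q := by
  rw [posLT, mem_filter, mem_range, and_iff_right_iff_imp]
  intro hn
  have := div_three_le_node n
  omega

lemma posLT_mono {Q R : ℕ} (h : Q ≤ R) : posLT Q ⊆ posLT R :=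
  fun _ hn => mem_posLT.2 ((mem_posLT.1 hn).trans_le h)

lemma posLT_succ_sdiff (q : ℕ) : posLT (q + 1) \ posLT q = {3 * q + 1, (3 * q + 1) / 2} := by
  ext n
  rw [Finset.mem_sdiff, mem_posLT, mem_posLT, mem_insert, mem_singleton, ← node_eq_iff]
  omega

lemma sum_posLT (Q : ℕ) : ∑ n ∈ posLT Q, signedSeq n = 0 := by
  induction Q with
  | zero => simp [posLT]
  | succ q ih =>
    rw [← sum_sdiff (posLT_mono q.le_succ), ih, posLT_succ_sdiff,
      sum_pair (by omega), signedSeq_three_mul_add_one, signedSeq_three_mul_add_one_div_two]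
    ring

lemma abs_sum_le_of_subset_posLT_succ_sdiff {q : ℕ} {X : Finset ℕ}
    (hX : X ⊆ posLT (q + 1) \ posLT q) : |∑ n ∈ X, signedSeq n| ≤ 2 * weight q := by
  have hnode : ∀ n ∈ X, |signedSeq n| = weight q := fun n hn => by
    rw [abs_signedSeq]
    have := Finset.mem_sdiff.1 (hX hn)
    rw [mem_posLT, mem_posLT] at this
    congr 1
    omega
  have hcard : (X.card : ℝ) ≤ 2 := by
    have := card_le_card hX
    rw [posLT_succ_sdiff] at this
    exact_mod_cast this.trans card_le_two
  calc |∑ n ∈ X, signedSeq n| ≤ ∑ n ∈ X, |signedSeq n| := abs_sum_le_sum_abs _ _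
    _ = X.card * weight q := by rw [sum_congr rfl hnode, sum_const, nsmul_eq_mul]
    _ ≤ 2 * weight q := by gcongr; exact (weight_pos q).le

lemma greedySet_posLT (Q : ℕ) : GreedySet signedSeq (posLT Q) := by
  intro n hn k hk
  rw [abs_signedSeq, abs_signedSeq]
  rw [mem_posLT] at hn hk
  exact weight_antitone (by omega)

/-- The weights are strictly decreasing, so `|signedSeq|` has ties only within the pair of
positions of a node. -/
lemma exists_posLT_subset_of_greedySet {B : Finset ℕ} (hB : GreedySet signedSeq B) :
    ∃ q, posLT q ⊆ B ∧ B ⊆ posLT (q + 1) := by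
  refine ⟨B.sup node, fun n hn => ?_, fun n hn => mem_posLT.2 (Nat.lt_succ_of_le (le_sup hn))⟩
  rw [mem_posLT] at hn
  obtain ⟨m, hm, hmq⟩ := exists_mem_eq_sup B (nonempty_iff_ne_empty.2 fun hB =>
    by simp [hB] at hn) node
  by_contra hnB
  have := hB m hm n hnB
  rw [abs_signedSeq, abs_signedSeq, ← hmq] at this
  exact this.not_gt (weight_strictAnti hn)

lemma abs_oneStar_greedySet_le {B : Finset ℕ} {q : ℕ} (hq : posLT q ⊆ B)
    (hB : B ⊆ posLT (q + 1)) : |oneStar signedSeq B| ≤ 2 * weight q := by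
  rw [oneStar, ← sum_sdiff hq, sum_posLT, add_zero]
  exact abs_sum_le_of_subset_posLT_succ_sdiff (sdiff_subset_sdiff hB subset_rfl)

lemma greedyLim_signedSeq : GreedyLim signedSeq 0 := by
  intro ε hε
  obtain ⟨N, hN⟩ := ((tendsto_weight.const_mul 2).eventually
    (gt_mem_nhds (show 2 * 0 < ε by linarith))).exists
  refine ⟨posLT (N + 1), greedySet_posLT _, fun B hB hNB => ?_⟩
  obtain ⟨q, hqB, hBq⟩ := exists_posLT_subset_of_greedySet hB
  have hNq : N ≤ q := by
    have := mem_posLT.1 (hBq (hNB (mem_posLT.2 (show node (3 * N + 1) < N + 1 by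
      rw [node_three_mul_add_one]; omega))))
    rw [node_three_mul_add_one] at this
    omega
  rw [sub_zero]
  calc |oneStar signedSeq B| ≤ 2 * weight q := abs_oneStar_greedySet_le hqB hBq
    _ ≤ 2 * weight N := by gcongr; exact weight_antitone hNq
    _ < ε := hN

lemma proj_posLT_apply (Q n : ℕ) :
    proj (posLT Q) signedSeq n = if node n < Q then signedSeq n else 0 := by
  simp only [proj, mem_posLT]

/-- The contribution of positions `3t+1, 3t+2, 3t+3` to the partial sums of
`proj (posLT Q) signedSeq`. -/
noncomputable def tripleSum (Q t : ℕ) : ℝ :=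
  (if t < Q then -weight t else 0) + (if 2 * t + 1 < Q then weight (2 * t + 1) else 0) +
    (if 2 * t + 2 < Q then weight (2 * t + 2) else 0)

lemma sum_range_proj_posLT (Q m : ℕ) :
    ∑ n ∈ range (3 * m + 1), proj (posLT Q) signedSeq n =
      (if 0 < Q then weight 0 else 0) + ∑ t ∈ range m, tripleSum Q t := by
  induction m with
  | zero =>
    simp [proj_posLT_apply, signedSeq_zero, show node 0 = 0 from node_eq_iff.2 (.inr rfl)]
  | succ m ih =>
    rw [show 3 * (m + 1) + 1 = 3 * m + 1 + 1 + 1 + 1 by ring, sum_range_succ, sum_range_succ,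
      sum_range_succ, ih, sum_range_succ, show 3 * m + 1 + 1 = 3 * m + 2 by ring,
      show 3 * m + 2 + 1 = 3 * m + 3 by ring, proj_posLT_apply, proj_posLT_apply,
      proj_posLT_apply, node_three_mul_add_one, node_three_mul_add_two, node_three_mul_add_three,
      signedSeq_three_mul_add_one, signedSeq_three_mul_add_two, signedSeq_three_mul_add_three,
      tripleSum]
    ring

/-- A triple `t` with `Q ≤ t` contributes nothing and one with `2t+2 < Q` cancels; otherwise
it contributes `-weight t` plus the weights of only some children. -/
lemma tripleSum_mem_Icc (Q t : ℕ) :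
    tripleSum Q t ∈ Set.Icc (-(if t ∈ Ico ((Q - 1) / 2) Q then weight t else 0)) 0 := by
  have := weight_eq_add_children t
  have := weight_pos (2 * t + 1)
  have := weight_pos (2 * t + 2)
  simp only [mem_Ico]
  unfold tripleSum
  constructor <;> split_ifs <;> first | omega | linarith

lemma abs_sum_range_three_mul_add_one_proj_posLT_le (Q m : ℕ) :
    |∑ n ∈ range (3 * m + 1), proj (posLT Q) signedSeq n| ≤ 2 * weight 0 := by
  have hwindow : -(2 * weight 0) ≤ ∑ t ∈ range m, tripleSum Q t :=
    calc -(2 * weight 0) ≤ -∑ t ∈ Ico ((Q - 1) / 2) Q, weight t :=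
          neg_le_neg (sum_Ico_weight_le (by omega))
      _ ≤ -∑ t ∈ range m ∩ Ico ((Q - 1) / 2) Q, weight t :=
          neg_le_neg (sum_le_sum_of_subset_of_nonneg inter_subset_right
            fun t _ _ => (weight_pos t).le)
      _ = ∑ t ∈ range m, -(if t ∈ Ico ((Q - 1) / 2) Q then weight t else 0) := by
          rw [sum_neg_distrib, sum_ite_mem]
      _ ≤ ∑ t ∈ range m, tripleSum Q t := sum_le_sum fun t _ => (tripleSum_mem_Icc Q t).1
  have hnonpos : ∑ t ∈ range m, tripleSum Q t ≤ 0 :=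
    sum_nonpos fun t _ => (tripleSum_mem_Icc Q t).2
  have := weight_pos 0
  rw [sum_range_proj_posLT, abs_le]
  constructor <;> split_ifs <;> linarith

lemma abs_sum_range_proj_posLT_le (Q P : ℕ) :
    |∑ n ∈ range P, proj (posLT Q) signedSeq n| ≤ 4 * weight 0 := by
  have hle : ∀ n, |proj (posLT Q) signedSeq n| ≤ weight 0 := fun n => by
    rw [proj_posLT_apply]
    split_ifs
    · exact (abs_signedSeq n).trans_le (weight_le_weight_zero _)
    · simpa using (weight_pos 0).le
  linarith [abs_sum_range_le_of_three_mul_add_one hle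
    (abs_sum_range_three_mul_add_one_proj_posLT_le Q) P]

lemma abs_oneStar_Icc_sdiff_le {A : Finset ℕ} (hA : GreedySet signedSeq A) (a b : ℕ) :
    |oneStar signedSeq (Icc a b \ A)| ≤ 14 * weight 0 := by
  obtain ⟨q, hqA, hAq⟩ := exists_posLT_subset_of_greedySet hA
  have hsub : Icc a b \ A ⊆ Icc a b \ posLT q := sdiff_subset_sdiff subset_rfl hqA
  have hpair : (Icc a b \ posLT q) \ (Icc a b \ A) ⊆ posLT (q + 1) \ posLT q := fun n hn => by
    simp only [Finset.mem_sdiff, not_and, not_not] at hn ⊢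
    exact ⟨hAq (hn.2 hn.1.1), hn.1.2⟩
  have hsplit : oneStar signedSeq (Icc a b \ A) =
      oneStar signedSeq (Icc a b \ posLT q) -
        ∑ n ∈ (Icc a b \ posLT q) \ (Icc a b \ A), signedSeq n := by
    rw [oneStar, oneStar, sum_sdiff_eq_sub hsub]
    ring
  have hfull := abs_sum_Ico_le_of_abs_sum_range_le abs_sum_range_signedSeq_le a (b + 1)
  have htrunc := abs_sum_Ico_le_of_abs_sum_range_le (abs_sum_range_proj_posLT_le q) a (b + 1)
  have hrest := abs_sum_le_of_subset_posLT_succ_sdiff hpair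
  have := weight_le_weight_zero q
  rw [hsplit, oneStar_Icc_sdiff]
  rw [abs_le] at hfull htrunc hrest ⊢
  constructor <;> linarith

lemma memB_signedSeq : MemB signedSeq :=
  memB_of_forall_greedySet fun _ hA => abs_oneStar_Icc_sdiff_le hA

/-- Removing the positions of all nodes of depth `≤ k` from the block of triples `t` of depth
`k` leaves exactly the positive copies of the nodes of depth `k + 1`. -/
lemma oneStar_Icc_sdiff_posLT (k : ℕ) :
    oneStar signedSeq
      (Icc (3 * (2 ^ k - 1) + 1) (3 * (2 ^ (k + 1) - 1)) \ posLT (2 ^ (k + 1) - 1)) = weight 0 := by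
  have hk := Nat.one_le_two_pow (n := k)
  have hk' : 2 ^ (k + 1) = 2 * 2 ^ k := pow_succ' 2 k
  set m := 2 ^ k - 1
  set Q := 2 ^ (k + 1) - 1
  have hmQ : m ≤ Q := by omega
  have hlevel : ∑ t ∈ Ico m Q, tripleSum Q t = -weight 0 := by
    rw [← sum_weight_depth k, ← sum_neg_distrib]
    refine sum_congr rfl fun t ht => ?_
    rw [mem_Ico] at ht
    rw [tripleSum, if_pos ht.2, if_neg (by omega), if_neg (by omega)]
    ring
  rw [sum_Ico_eq_sub _ hmQ] at hlevel
  rw [oneStar_Icc_sdiff, sum_Ico_eq_sub _ (by omega), sum_Ico_eq_sub _ (by omega),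
    sum_range_three_mul_add_one, sum_range_three_mul_add_one, sum_range_proj_posLT,
    sum_range_proj_posLT]
  linarith

lemma not_memB0_signedSeq : ¬ MemB0 signedSeq := by
  refine not_memB0_of_forall_greedySet (weight_pos 0) fun A hA => ?_
  obtain ⟨q, -, hAq⟩ := exists_posLT_subset_of_greedySet hA
  refine ⟨posLT (2 ^ (q + 1) - 1), greedySet_posLT _,
    hAq.trans (posLT_mono (by have := Nat.lt_two_pow_self (n := q + 1); omega)),
    3 * (2 ^ q - 1) + 1, 3 * (2 ^ (q + 1) - 1), ?_⟩
  rw [oneStar_Icc_sdiff_posLT, abs_of_pos (weight_pos 0)]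

end GreedyCounterexample

open GreedyCounterexample in
/-- there is `h ∈ 𝔸 ∩ 𝒔 ∩ 𝔹` with `h ∉ 𝔹₀`; in particular
`𝔸 ∩ 𝒔 ∩ 𝔹 ⊄ 𝔹₀`. -/
theorem stmt_14 :
    (∃ h : ℕ → ℝ, MemA h ∧ MemSeries h ∧ MemB h ∧ ¬ MemB0 h) ∧
    ¬ ∀ f : ℕ → ℝ, MemA f → MemSeries f → MemB f → MemB0 f := by
  have hA : MemA signedSeq := ⟨memc0_signedSeq, 0, greedyLim_signedSeq⟩
  have hS : MemSeries signedSeq := ⟨weight 0, seriesLim_signedSeq⟩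
  exact ⟨⟨signedSeq, hA, hS, memB_signedSeq, not_memB0_signedSeq⟩,
    fun H => not_memB0_signedSeq (H _ hA hS memB_signedSeq)⟩
end

section
/- There exist sequences f₁ ∈ 𝔹₀ and g₁ : ℕ → ℝ with ∑_n |g₁(n)| < ∞ such that f₁ + g₁ ∉ 𝔹 and f₁ + g₁ ∉ 𝔸. -/
open Filter ENNReal
open scoped Classical

/-!
Take `f₁ = (v 0, -v 0, v 1, -v 1, …)` with `v` strictly decreasing to `0`. A greedy set of `f₁`
is an initial segment up to one pair, and every interval sum of `f₁` beyond the `t`-th pair is at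
most `2 v t` in absolute value, so `f₁ ∈ 𝔹₀`.

The pairs are grouped into blocks `[4ᵏ - 1, 4ᵏ⁺¹ - 1)`, on which `v ≈ 2⁻ᵏ`. The summable
perturbation `g₁` lifts every positive term of block `k` above all negative terms of that block,
but keeps it below the previous blocks. The greedy algorithm for `f₁ + g₁` therefore takes all
positive terms of block `k` before its negative ones, which add up to about `-3 · 2ᵏ`. Hence
`β(f₁ + g₁, ·)` is unbounded on greedy sets, and the greedy sums along the two greedy sets
before and after the negative terms of block `k` differ by at least `1` for every `k`.
-/

open Finset Filter Topology

lemma GreedySet.of_threshold {f : ℕ → ℝ} {A : Finset ℕ} (c : ℝ)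
    (hin : ∀ n ∈ A, c ≤ |f n|) (hout : ∀ k ∉ A, |f k| ≤ c) : GreedySet f A :=
  fun n hn k hk => (hout k hk).trans (hin n hn)

lemma ofReal_abs_oneStar_le_BNorm {f : ℕ → ℝ} {A : Finset ℕ} (hA : GreedySet f A) (a b : ℕ) :
    ENNReal.ofReal |oneStar f (Icc a b \ A)| ≤ BNorm f :=
  calc _ ≤ beta f A := le_iSup₂ (f := fun a b => ENNReal.ofReal |oneStar f (Icc a b \ A)|) a b
    _ ≤ BNorm f := le_iSup₂ (f := fun A (_ : A ∈ {A | GreedySet f A}) => beta f A) A hA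

lemma not_memB_of_forall_exists_le {f : ℕ → ℝ}
    (h : ∀ m : ℕ, ∃ A, GreedySet f A ∧ ∃ a b, (m : ℝ) ≤ |oneStar f (Icc a b \ A)|) :
    ¬ MemB f := by
  intro hf
  obtain ⟨m, hm⟩ := ENNReal.exists_nat_gt hf.ne
  obtain ⟨A, hA, a, b, hab⟩ := h m
  have hmB : (m : ℝ≥0∞) ≤ BNorm f := by
    rw [← ENNReal.ofReal_natCast]
    exact (ENNReal.ofReal_le_ofReal hab).trans (ofReal_abs_oneStar_le_BNorm hA a b)
  exact hmB.not_gt hm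

lemma not_exists_greedyLim {f : ℕ → ℝ} {δ : ℝ} (hδ : 0 < δ)
    (h : ∀ N, ∃ A B, GreedySet f A ∧ GreedySet f B ∧ range N ⊆ A ∧ range N ⊆ B ∧
      δ ≤ |oneStar f B - oneStar f A|) :
    ¬ ∃ s, GreedyLim f s := by
  rintro ⟨s, hs⟩
  obtain ⟨A₀, -, hclose⟩ := hs (δ / 2) (half_pos hδ)
  obtain ⟨A, B, hA, hB, hNA, hNB, hAB⟩ := h (A₀.sup id + 1)
  have hA₀ : A₀ ⊆ range (A₀.sup id + 1) :=
    fun n hn => mem_range.2 (Nat.lt_succ_of_le (le_sup (f := id) hn))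
  have hsA := hclose A hA (hA₀.trans hNA)
  have hsB := hclose B hB (hA₀.trans hNB)
  have := abs_sub_le (oneStar f B) s (oneStar f A)
  rw [abs_sub_comm s] at this
  linarith

def interleave (a b : ℕ → ℝ) (n : ℕ) : ℝ := if n % 2 = 0 then a (n / 2) else b (n / 2)

lemma interleave_add (a b c d : ℕ → ℝ) :
    interleave a b + interleave c d = interleave (a + c) (b + d) := by
  funext n
  simp only [interleave, Pi.add_apply]
  split_ifs <;> rfl

lemma summable_interleave {a b : ℕ → ℝ} (ha : Summable a) (hb : Summable b) :
    Summable (interleave a b) :=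
  Summable.even_add_odd (by simpa [interleave] using ha)
    (by simpa [interleave, Nat.mul_add_div] using hb)

section Alternating

variable {v : ℕ → ℝ}

lemma abs_interleave_neg (hv : 0 ≤ v) (n : ℕ) : |interleave v (-v) n| = v (n / 2) := by
  unfold interleave
  split_ifs <;> simp [abs_of_nonneg (hv _)]

lemma sum_range_interleave_neg (m : ℕ) :
    ∑ n ∈ range m, interleave v (-v) n = if m % 2 = 0 then 0 else v (m / 2) := by
  induction m with
  | zero => simp
  | succ m ih =>
    rw [sum_range_succ, ih, interleave]
    rcases Nat.mod_two_eq_zero_or_one m with hm | hm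
    · rw [if_pos hm, if_pos hm, if_neg (by omega), show (m + 1) / 2 = m / 2 by omega, zero_add]
    · rw [if_neg (by omega), if_neg (by omega), if_pos (by omega), Pi.neg_apply, add_neg_cancel]

lemma abs_sum_range_interleave_neg_le (hv : 0 ≤ v) (m : ℕ) :
    |∑ n ∈ range m, interleave v (-v) n| ≤ v (m / 2) := by
  rw [sum_range_interleave_neg]
  split_ifs
  · simpa using hv _
  · exact (abs_of_nonneg (hv _)).le

lemma abs_sum_Icc_interleave_neg_le (hv : Antitone v) (h0 : 0 ≤ v) {t c : ℕ} (hc : 2 * t ≤ c)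
    (d : ℕ) : |∑ n ∈ Icc c d, interleave v (-v) n| ≤ 2 * v t := by
  rcases le_or_gt c (d + 1) with hcd | hcd
  · rw [← Ico_add_one_right_eq_Icc, sum_Ico_eq_sub _ hcd]
    have hd := abs_sum_range_interleave_neg_le h0 (d + 1)
    have hc' := abs_sum_range_interleave_neg_le h0 c
    have hvd : v ((d + 1) / 2) ≤ v t := hv (by omega)
    have hvc : v (c / 2) ≤ v t := hv (by omega)
    linarith [abs_sub (∑ n ∈ range (d + 1), interleave v (-v) n)
      (∑ n ∈ range c, interleave v (-v) n)]
  · rw [Icc_eq_empty (by omega), sum_empty, abs_zero]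
    exact mul_nonneg zero_le_two (h0 t)

lemma abs_sum_subset_pair_interleave_neg_le (h0 : 0 ≤ v) {t : ℕ} {S : Finset ℕ}
    (hS : S ⊆ {2 * t, 2 * t + 1}) : |∑ n ∈ S, interleave v (-v) n| ≤ 2 * v t :=
  calc |∑ n ∈ S, interleave v (-v) n|
      ≤ ∑ n ∈ S, |interleave v (-v) n| := abs_sum_le_sum_abs _ _
    _ ≤ ∑ n ∈ ({2 * t, 2 * t + 1} : Finset ℕ), |interleave v (-v) n| :=
        sum_le_sum_of_subset_of_nonneg hS fun _ _ _ => abs_nonneg _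
    _ = 2 * v t := by
        rw [sum_pair (by omega), abs_interleave_neg h0, abs_interleave_neg h0,
          show (2 * t + 1) / 2 = t by omega, show 2 * t / 2 = t by omega, two_mul]

lemma abs_oneStar_Icc_sdiff_interleave_neg_le (hv : Antitone v) (h0 : 0 ≤ v)
    {B : Finset ℕ} {t : ℕ} (hlo : range (2 * t) ⊆ B) (hhi : B ⊆ range (2 * t + 2))
    (a b : ℕ) :
    |oneStar (interleave v (-v)) (Icc a b \ B)| ≤ 4 * v t := by
  obtain ⟨c, hc⟩ : ∃ c, max a (2 * t) = c := ⟨_, rfl⟩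
  have hcut : Icc a b \ B = Icc c b \ (Icc c b ∩ B) := by
    refine Finset.ext fun n => ?_
    simp only [Finset.mem_sdiff, Finset.mem_Icc, Finset.mem_inter, ← hc, max_le_iff]
    constructor
    · rintro ⟨⟨ha, hb⟩, hnB⟩
      have : 2 * t ≤ n := by
        by_contra hn
        exact hnB (hlo (mem_range.2 (by omega)))
      exact ⟨⟨⟨ha, this⟩, hb⟩, fun h => hnB h.2⟩
    · rintro ⟨⟨⟨ha, ht⟩, hb⟩, hn⟩
      exact ⟨⟨ha, hb⟩, fun hnB => hn ⟨⟨⟨ha, ht⟩, hb⟩, hnB⟩⟩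
  have hpair : Icc c b ∩ B ⊆ {2 * t, 2 * t + 1} := by
    intro n hn
    rw [mem_inter, mem_Icc] at hn
    have := mem_range.1 (hhi hn.2)
    simp only [mem_insert, mem_singleton]
    omega
  rw [oneStar, hcut, sum_sdiff_eq_sub inter_subset_left]
  have h1 := abs_sum_Icc_interleave_neg_le hv h0 (hc ▸ le_max_right a (2 * t)) b
  have h2 := abs_sum_subset_pair_interleave_neg_le h0 hpair
  linarith [abs_sub (∑ n ∈ Icc c b, interleave v (-v) n)
    (∑ n ∈ Icc c b ∩ B, interleave v (-v) n)]

lemma greedySet_range_interleave_neg (hv : Antitone v) (h0 : 0 ≤ v) (m : ℕ) :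
    GreedySet (interleave v (-v)) (range (2 * m)) := by
  intro n hn k hk
  rw [mem_range] at hn hk
  rw [abs_interleave_neg h0, abs_interleave_neg h0]
  exact hv (by omega)

lemma GreedySet.exists_range_subset_interleave_neg (hv : StrictAnti v) (h0 : 0 ≤ v)
    {B : Finset ℕ} (hB : GreedySet (interleave v (-v)) B) {j : ℕ} (hj : j ∈ B) :
    ∃ t, j / 2 ≤ t ∧ range (2 * t) ⊆ B ∧ B ⊆ range (2 * t + 2) := by
  have hne : B.Nonempty := ⟨j, hj⟩
  refine ⟨B.max' hne / 2, Nat.div_le_div_right (B.le_max' j hj), fun i hi => ?_,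
    fun n hn => mem_range.2 (by have := B.le_max' n hn; omega)⟩
  by_contra hiB
  have := hB _ (B.max'_mem hne) i hiB
  rw [abs_interleave_neg h0, abs_interleave_neg h0] at this
  exact this.not_gt (hv (by rw [mem_range] at hi; omega))

theorem memB0_interleave_neg (hv : StrictAnti v) (hlim : Tendsto v atTop (𝓝 0)) :
    MemB0 (interleave v (-v)) := by
  have h0 : 0 ≤ v := fun n => hv.antitone.le_of_tendsto hlim n
  refine ⟨squeeze_zero_norm (fun n => (abs_interleave_neg h0 n).le)
    (hlim.comp (Nat.tendsto_div_const_atTop two_ne_zero)), fun ε hε => ?_⟩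
  obtain ⟨N, hN⟩ := (hlim.eventually (gt_mem_nhds (by positivity : 0 < ε / 4))).exists
  refine ⟨range (2 * (N + 1)), greedySet_range_interleave_neg hv.antitone h0 _,
    fun B hB hsub => ?_⟩
  obtain ⟨t, hNt, hlo, hhi⟩ :=
    hB.exists_range_subset_interleave_neg hv h0 (hsub (mem_range.2 (by omega : 2 * N + 1 < _)))
  have hβ : beta (interleave v (-v)) B ≤ ENNReal.ofReal (4 * v N) :=
    iSup₂_le fun a b => ENNReal.ofReal_le_ofReal <|
      (abs_oneStar_Icc_sdiff_interleave_neg_le hv.antitone h0 hlo hhi a b).trans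
        (by have := hv.antitone (show N ≤ t by omega); linarith)
  exact hβ.trans_lt ((ENNReal.ofReal_lt_ofReal_iff hε).2 (by linarith))

end Alternating

namespace PerturbedAlternating

def block (p : ℕ) : ℕ := Nat.log 4 (p + 1)

def blockStart (k : ℕ) : ℕ := 4 ^ k - 1

def blockPairs (k : ℕ) : Finset ℕ := Ico (blockStart k) (blockStart (k + 1))

lemma mem_blockPairs {p k : ℕ} :
    p ∈ blockPairs k ↔ blockStart k ≤ p ∧ p < blockStart (k + 1) :=
  Finset.mem_Ico

noncomputable def v (p : ℕ) : ℝ := (1 / 2) ^ block p + (1 / 16) ^ (p + 1)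

noncomputable def w (p : ℕ) : ℝ := (1 / 2) ^ block p + (1 / 2) ^ (p + 1)

lemma pow_block_le (p : ℕ) : 4 ^ block p ≤ p + 1 := Nat.pow_log_le_self 4 (Nat.succ_ne_zero p)

lemma lt_pow_block_succ (p : ℕ) : p + 1 < 4 ^ (block p + 1) :=
  Nat.lt_pow_succ_log_self (by norm_num) _

lemma block_le (p : ℕ) : block p ≤ p :=
  Nat.lt_succ_iff.1 ((Nat.lt_pow_self (by norm_num)).trans_le (pow_block_le p))

lemma block_mono : Monotone block := fun _ _ h => Nat.log_mono_right (by omega)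

lemma block_lt_iff {p k : ℕ} : block p < k ↔ p < blockStart k := by
  have := Nat.one_le_pow k 4 (by norm_num)
  rw [block, Nat.log_lt_iff_lt_pow (by norm_num) (Nat.succ_ne_zero p), blockStart]
  omega

lemma blockStart_lt_succ (k : ℕ) : blockStart k < blockStart (k + 1) := by
  have := Nat.one_le_pow k 4 (by norm_num)
  rw [blockStart, blockStart, pow_succ]
  omega

lemma block_blockStart (k : ℕ) : block (blockStart k) = k := by
  have h1 : ¬ block (blockStart k) < k := by rw [block_lt_iff]; exact lt_irrefl _
  have h2 : block (blockStart k) < k + 1 := block_lt_iff.2 (blockStart_lt_succ k)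
  omega

lemma block_eq_of_mem_blockPairs {p k : ℕ} (hp : p ∈ blockPairs k) : block p = k := by
  rw [mem_blockPairs] at hp
  have h1 : ¬ block p < k := fun h => (block_lt_iff.1 h).not_ge hp.1
  have h2 : block p < k + 1 := block_lt_iff.2 hp.2
  omega

lemma block_lt_block {p q : ℕ} (k : ℕ) (hp : p < blockStart k) (hq : blockStart k ≤ q) :
    block p < block q :=
  (block_lt_iff.2 hp).trans_le (block_blockStart k ▸ block_mono hq)

lemma tendsto_block : Tendsto block atTop atTop :=
  tendsto_atTop_atTop.2 fun k =>
    ⟨blockStart k, fun _ hp => block_blockStart k ▸ block_mono hp⟩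

lemma v_strictAnti : StrictAnti v :=
  Antitone.add_strictAnti
    (fun _ _ h => pow_le_pow_of_le_one (by norm_num) (by norm_num) (block_mono h))
    fun _ _ h => pow_lt_pow_right_of_lt_one₀ (by norm_num) (by norm_num) (by omega)

lemma tendsto_v : Tendsto v atTop (𝓝 0) := by
  have h1 := (tendsto_pow_atTop_nhds_zero_of_lt_one (r := (1 / 2 : ℝ)) (by norm_num)
    (by norm_num)).comp tendsto_block
  have h2 := (tendsto_pow_atTop_nhds_zero_of_lt_one (r := (1 / 16 : ℝ)) (by norm_num)
    (by norm_num)).comp (tendsto_add_atTop_nat 1)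
  rw [← add_zero 0]
  exact h1.add h2

/-- This is where the factor `1/16` in `v` comes from: within one block `p + 1 < 4 (q + 1)`, so
`(1/16)^(q+1) = (1/2)^(4(q+1)) < (1/2)^(p+1)`. -/
lemma v_lt_w_of_block_eq {p q : ℕ} (h : block p = block q) : v q < w p := by
  have hpq : p + 1 < 4 * (q + 1) := by
    have := lt_pow_block_succ p; have := pow_block_le q; rw [pow_succ, h] at *; omega
  unfold v w
  rw [h]
  have : (1 / 16 : ℝ) ^ (q + 1) = (1 / 2) ^ (4 * (q + 1)) := by rw [pow_mul]; norm_num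
  gcongr
  rw [this]
  exact pow_lt_pow_right_of_lt_one₀ (by norm_num) (by norm_num) hpq

lemma w_lt_v_of_block_lt {p q : ℕ} (h : block p < block q) : w q < v p := by
  have hq : (1 / 2 : ℝ) ^ (q + 1) ≤ (1 / 2) ^ block q :=
    pow_le_pow_of_le_one (by norm_num) (by norm_num) (by have := block_le q; omega)
  have hk : (1 / 2 : ℝ) ^ block q ≤ (1 / 2) ^ (block p + 1) :=
    pow_le_pow_of_le_one (by norm_num) (by norm_num) h
  have : (0 : ℝ) < (1 / 16) ^ (p + 1) := by positivity
  rw [pow_succ] at hk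
  unfold v w
  linarith

def blockNeg (k : ℕ) : Finset ℕ := (blockPairs k).image fun p => 2 * p + 1

def blockPrefix (k : ℕ) : Finset ℕ := range (2 * blockStart (k + 1)) \ blockNeg k

lemma mem_blockNeg {k n : ℕ} :
    n ∈ blockNeg k ↔ n % 2 = 1 ∧ blockStart k ≤ n / 2 ∧ n / 2 < blockStart (k + 1) := by
  rw [blockNeg, Finset.mem_image]
  constructor
  · rintro ⟨p, hp, rfl⟩
    rw [mem_blockPairs] at hp
    omega
  · rintro ⟨h1, h2, h3⟩
    exact ⟨n / 2, mem_blockPairs.2 ⟨h2, h3⟩, by omega⟩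

lemma blockNeg_subset_range (k : ℕ) : blockNeg k ⊆ range (2 * blockStart (k + 1)) := by
  intro n hn
  rw [mem_blockNeg] at hn
  exact mem_range.2 (by omega)

lemma range_subset_blockPrefix (k : ℕ) : range (2 * blockStart k) ⊆ blockPrefix k := by
  intro n hn
  have := blockStart_lt_succ k
  rw [mem_range] at hn
  rw [blockPrefix, Finset.mem_sdiff, mem_range, mem_blockNeg]
  omega

lemma v_pos (p : ℕ) : 0 < v p := by unfold v; positivity

lemma abs_interleave_even {n : ℕ} (hn : n % 2 = 0) : |interleave w (-v) n| = w (n / 2) := by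
  rw [interleave, if_pos hn, abs_of_pos ((v_pos _).trans (v_lt_w_of_block_eq rfl))]

lemma abs_interleave_odd {n : ℕ} (hn : n % 2 = 1) : |interleave w (-v) n| = v (n / 2) := by
  rw [interleave, if_neg (by omega), Pi.neg_apply, abs_neg, abs_of_pos (v_pos _)]

lemma abs_interleave_le (n : ℕ) : |interleave w (-v) n| ≤ w (n / 2) := by
  rcases Nat.mod_two_eq_zero_or_one n with hn | hn
  · rw [abs_interleave_even hn]
  · rw [abs_interleave_odd hn]; exact (v_lt_w_of_block_eq rfl).le

lemma le_abs_interleave (n : ℕ) : v (n / 2) ≤ |interleave w (-v) n| := by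
  rcases Nat.mod_two_eq_zero_or_one n with hn | hn
  · rw [abs_interleave_even hn]; exact (v_lt_w_of_block_eq rfl).le
  · rw [abs_interleave_odd hn]

lemma greedySet_blockPrefix (k : ℕ) : GreedySet (interleave w (-v)) (blockPrefix k) := by
  refine GreedySet.of_threshold (v (blockStart k)) (fun n hn => ?_) (fun n hn => ?_)
  · rw [blockPrefix, Finset.mem_sdiff, mem_range, mem_blockNeg] at hn
    rcases lt_or_ge (n / 2) (blockStart k) with hlt | hge
    · exact (v_strictAnti.antitone hlt.le).trans (le_abs_interleave n)
    · have hblock : block (n / 2) = k :=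
        block_eq_of_mem_blockPairs (mem_blockPairs.2 ⟨hge, by omega⟩)
      rw [abs_interleave_even (by omega)]
      exact (v_lt_w_of_block_eq (hblock.trans (block_blockStart k).symm)).le
  · rw [blockPrefix, Finset.mem_sdiff, mem_range, not_and_or, not_lt, not_not] at hn
    rcases hn with hn | hn
    · have := blockStart_lt_succ k
      exact (abs_interleave_le n).trans
        (w_lt_v_of_block_lt (block_lt_block (k + 1) (by omega) (by omega))).le
    · rw [mem_blockNeg] at hn
      rw [abs_interleave_odd hn.1]
      exact v_strictAnti.antitone hn.2.1

lemma greedySet_range (k : ℕ) :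
    GreedySet (interleave w (-v)) (range (2 * blockStart (k + 1))) := by
  have := blockStart_lt_succ k
  refine GreedySet.of_threshold (v (blockStart (k + 1) - 1)) (fun n hn => ?_) (fun n hn => ?_)
  · rw [mem_range] at hn
    exact (v_strictAnti.antitone (by omega)).trans (le_abs_interleave n)
  · rw [mem_range, not_lt] at hn
    exact (abs_interleave_le n).trans
      (w_lt_v_of_block_lt (block_lt_block (k + 1) (by omega) (by omega))).le

lemma sum_blockNeg (k : ℕ) :
    ∑ n ∈ blockNeg k, interleave w (-v) n = -∑ p ∈ blockPairs k, v p := by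
  rw [blockNeg, sum_image fun p _ q _ h => by omega, ← sum_neg_distrib]
  refine sum_congr rfl fun p _ => ?_
  rw [interleave, if_neg (by omega), show (2 * p + 1) / 2 = p by omega, Pi.neg_apply]

lemma add_one_le_sum_v_blockPairs (k : ℕ) : (k : ℝ) + 1 ≤ ∑ p ∈ blockPairs k, v p := by
  have hcard : #(blockPairs k) = 3 * 4 ^ k := by
    have := Nat.one_le_pow k 4 (by norm_num)
    rw [blockPairs, Nat.card_Ico, blockStart, blockStart, pow_succ]
    omega
  have hterm : ∀ p ∈ blockPairs k, (1 / 2 : ℝ) ^ k ≤ v p := fun p hp => by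
    have : (0 : ℝ) < (1 / 16) ^ (p + 1) := by positivity
    rw [v, block_eq_of_mem_blockPairs hp]
    linarith
  have hsum := card_nsmul_le_sum _ _ _ hterm
  rw [hcard, nsmul_eq_mul, Nat.cast_mul, Nat.cast_pow, mul_assoc, ← mul_pow] at hsum
  have hk : (k : ℝ) + 1 ≤ 2 ^ k := by exact_mod_cast Nat.lt_two_pow_self
  norm_num at hsum
  linarith

lemma Icc_sdiff_blockPrefix (k : ℕ) :
    Icc (2 * blockStart k) (2 * blockStart (k + 1) - 1) \ blockPrefix k = blockNeg k := by
  have := blockStart_lt_succ k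
  refine Finset.ext fun n => ?_
  rw [blockPrefix, Finset.mem_sdiff, Finset.mem_sdiff, Finset.mem_Icc, mem_range, mem_blockNeg]
  omega

lemma oneStar_range_sub_oneStar_blockPrefix (k : ℕ) :
    oneStar (interleave w (-v)) (range (2 * blockStart (k + 1)))
      - oneStar (interleave w (-v)) (blockPrefix k)
      = -∑ p ∈ blockPairs k, v p := by
  rw [oneStar, oneStar, blockPrefix, sum_sdiff_eq_sub (blockNeg_subset_range k), sum_blockNeg]
  ring

lemma not_memB : ¬ MemB (interleave w (-v)) := by
  refine not_memB_of_forall_exists_le fun m =>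
    ⟨blockPrefix m, greedySet_blockPrefix m, 2 * blockStart m, 2 * blockStart (m + 1) - 1, ?_⟩
  rw [oneStar, Icc_sdiff_blockPrefix, sum_blockNeg, abs_neg,
    abs_of_nonneg (sum_nonneg fun p _ => (v_pos p).le)]
  linarith [add_one_le_sum_v_blockPairs m]

lemma not_memA : ¬ MemA (interleave w (-v)) := by
  refine fun h => not_exists_greedyLim one_pos (fun N => ?_) h.2
  have hle : N ≤ 2 * blockStart N := by
    have := Nat.lt_pow_self (n := N) (by norm_num : 1 < 4)
    rw [blockStart]
    omega
  have hN := (range_subset_range.2 hle).trans (range_subset_blockPrefix N)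
  refine ⟨blockPrefix N, _, greedySet_blockPrefix N, greedySet_range N, hN,
    hN.trans sdiff_subset, ?_⟩
  rw [oneStar_range_sub_oneStar_blockPrefix, abs_neg,
    abs_of_nonneg (sum_nonneg fun p _ => (v_pos p).le)]
  linarith [add_one_le_sum_v_blockPairs N, (Nat.cast_nonneg N : (0 : ℝ) ≤ N)]

lemma summable_w_sub_v : Summable (w - v) := by
  have hw : w - v = fun p => (1 / 2 : ℝ) ^ (p + 1) - (1 / 16) ^ (p + 1) := by
    funext p
    simp only [Pi.sub_apply, v, w]
    ring
  rw [hw]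
  exact ((summable_nat_add_iff 1).2 (summable_geometric_of_lt_one (by norm_num) (by norm_num))).sub
    ((summable_nat_add_iff 1).2 (summable_geometric_of_lt_one (by norm_num) (by norm_num)))

end PerturbedAlternating

open PerturbedAlternating

/-- there are `f₁ ∈ 𝔹₀` and `g₁ ∈ ℓ₁` with `f₁ + g₁ ∉ 𝔹` and
`f₁ + g₁ ∉ 𝔸`. -/
theorem stmt_15 :
    ∃ f₁ g₁ : ℕ → ℝ, MemB0 f₁ ∧ (Summable fun n => |g₁ n|) ∧
      ¬ MemB (f₁ + g₁) ∧ ¬ MemA (f₁ + g₁) := by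
  have hsum : interleave v (-v) + interleave (w - v) 0 = interleave w (-v) := by
    rw [interleave_add, add_sub_cancel, add_zero]
  refine ⟨interleave v (-v), interleave (w - v) 0, memB0_interleave_neg v_strictAnti tendsto_v,
    (summable_interleave summable_w_sub_v summable_zero).abs, ?_⟩
  rw [hsum]
  exact ⟨not_memB, not_memA⟩
end

section
/- None of the sets 𝔹₀, 𝔹, 𝔸, 𝔸 ∩ 𝒔, 𝔹 ∩ 𝒔, and 𝔸 ∩ 𝔹 ∩ 𝒔 is closed under addition of sequences; in particular, none of them is a linear subspace of the space of real sequences. -/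
open Filter ENNReal
open scoped Classical

/-!
Split a positive injective sequence `c → 0` as `f = (c₀, -c₀, c₂, -c₂, …)` and
`g = (0, c₁, -c₁, c₃, -c₃, …)`. In a sequence made of adjacent cancelling pairs whose magnitudes
are distinct, a greedy set breaks at most one pair and an interval minus a greedy set at most three;
hence `f` and `g` lie in every space considered, with greedy sum and ordinary sum `0`.

On the other hand `f + g` is the difference sequence of `c`, whose partial sums are the bounded
numbers `c N`. Take for `c` a sawtooth whose `k`-th tooth rises by about `1 / (k + 1)` and then
descends in very many very small steps. Greedy sets of `f + g` above a small threshold contain the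
rises of many teeth, of harmonic total mass, but the descents of only the first few teeth, so greedy
sums of `f + g` are unbounded. This rules out `𝔸`, and, since the partial sums are bounded, also
`𝔹` and `𝔹₀`.
-/

theorem Memc0.exists_greedySet {y : ℕ → ℝ} (hy : Memc0 y) {t : ℝ} (ht : 0 < t) :
    ∃ A : Finset ℕ, GreedySet y A ∧ ∀ n, n ∈ A ↔ t < |y n| := by
  obtain ⟨N, hN⟩ := Metric.tendsto_atTop.1 hy t ht
  have hmem : ∀ n, n ∈ (Finset.range N).filter (fun n => t < |y n|) ↔ t < |y n| := by
    intro n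
    simp only [Finset.mem_filter, Finset.mem_range, and_iff_right_iff_imp]
    intro hn
    by_contra! hNn
    have := hN n hNn
    rw [Real.dist_eq, sub_zero] at this
    linarith
  refine ⟨_, fun n hn k hk => ?_, hmem⟩
  rw [hmem] at hn hk
  linarith

theorem Memc0.exists_greedySet_forall_le {y : ℕ → ℝ} (hy : Memc0 y) {t : ℝ} (ht : 0 < t) :
    ∃ A : Finset ℕ, GreedySet y A ∧ ∀ B : Finset ℕ, A ⊆ B → ∀ k ∉ B, |y k| ≤ t := by
  obtain ⟨A, hA, hmem⟩ := hy.exists_greedySet ht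
  exact ⟨A, hA, fun B hAB k hk => not_lt.1 fun h => hk (hAB ((hmem k).2 h))⟩

structure AdjacentPairing (y : ℕ → ℝ) (φ : ℕ → ℕ) : Prop where
  involutive : Function.Involutive φ
  apply_partner : ∀ n, y (φ n) = -y n
  partner_le : ∀ n, φ n ≤ n + 1
  le_partner : ∀ n, n ≤ φ n + 1
  eq_or_eq_partner_of_abs_eq : ∀ n m, y n ≠ 0 → |y m| = |y n| → m = n ∨ m = φ n

noncomputable def unpaired (y : ℕ → ℝ) (φ : ℕ → ℕ) (D : Finset ℕ) : Finset ℕ :=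
  D.filter fun n => φ n ∉ D ∧ y n ≠ 0

theorem mem_unpaired {y : ℕ → ℝ} {φ : ℕ → ℕ} {D : Finset ℕ} {n : ℕ} :
    n ∈ unpaired y φ D ↔ n ∈ D ∧ φ n ∉ D ∧ y n ≠ 0 :=
  Finset.mem_filter

namespace AdjacentPairing

variable {y : ℕ → ℝ} {φ : ℕ → ℕ}

theorem abs_sum_le (hp : AdjacentPairing y φ) (D : Finset ℕ) :
    |∑ n ∈ D, y n| ≤ ∑ n ∈ unpaired y φ D, |y n| := by
  have hpaired : ∑ n ∈ D.filter (fun n => φ n ∈ D), y n = 0 := by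
    refine Finset.sum_involution (fun n _ => φ n) (fun n _ => by rw [hp.apply_partner]; ring)
      (fun n _ hn hfix => hn ?_) (fun n hn => ?_) (fun n _ => hp.involutive n)
    · have := hp.apply_partner n
      rw [hfix] at this
      linarith
    · simp only [Finset.mem_filter] at hn ⊢
      exact ⟨hn.2, by rw [hp.involutive n]; exact hn.1⟩
  have hunpaired : ∑ n ∈ D.filter (fun n => φ n ∉ D), y n = ∑ n ∈ unpaired y φ D, y n := by
    rw [unpaired, ← Finset.filter_filter]
    exact (Finset.sum_filter_ne_zero _).symm
  rw [← Finset.sum_filter_add_sum_filter_not D (fun n => φ n ∈ D), hpaired, zero_add, hunpaired]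
  exact Finset.abs_sum_le_sum_abs _ _

theorem abs_sum_le_mul (hp : AdjacentPairing y φ) {D : Finset ℕ} {k : ℕ} {β : ℝ} (hβ : 0 ≤ β)
    (hcard : (unpaired y φ D).card ≤ k) (hle : ∀ n ∈ unpaired y φ D, |y n| ≤ β) :
    |∑ n ∈ D, y n| ≤ k * β :=
  calc |∑ n ∈ D, y n| ≤ ∑ n ∈ unpaired y φ D, |y n| := hp.abs_sum_le D
    _ ≤ (unpaired y φ D).card * β := by
      rw [← nsmul_eq_mul]
      exact Finset.sum_le_card_nsmul _ _ _ hle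
    _ ≤ k * β := by gcongr

theorem card_unpaired_le_one (hp : AdjacentPairing y φ) {B : Finset ℕ} (hB : GreedySet y B) :
    (unpaired y φ B).card ≤ 1 := by
  refine Finset.card_le_one.2 fun n hn m hm => ?_
  rw [mem_unpaired] at hn hm
  have hnm : |y m| ≤ |y n| := by simpa [hp.apply_partner] using hB n hn.1 (φ m) hm.2.1
  have hmn : |y n| ≤ |y m| := by simpa [hp.apply_partner] using hB m hm.1 (φ n) hn.2.1
  rcases hp.eq_or_eq_partner_of_abs_eq n m hn.2.2 (le_antisymm hnm hmn) with h | h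
  · exact h.symm
  · exact absurd (h ▸ hm.1) hn.2.1

theorem card_unpaired_Icc_sdiff_le_three (hp : AdjacentPairing y φ) {B : Finset ℕ}
    (hB : GreedySet y B) (a b : ℕ) : (unpaired y φ (Finset.Icc a b \ B)).card ≤ 3 := by
  have hsub : unpaired y φ (Finset.Icc a b \ B) ⊆
      insert a (insert b ((unpaired y φ B).image φ)) := by
    intro n hn
    simp only [mem_unpaired, Finset.mem_sdiff, Finset.mem_Icc, not_and, not_not] at hn
    obtain ⟨⟨⟨han, hnb⟩, hnB⟩, hφn, hyn⟩ := hn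
    simp only [Finset.mem_insert, Finset.mem_image]
    by_cases hφB : φ n ∈ B
    · refine Or.inr (Or.inr ⟨φ n, mem_unpaired.2 ⟨hφB, ?_, ?_⟩, hp.involutive n⟩)
      · rwa [hp.involutive n]
      · simpa [hp.apply_partner] using hyn
    · have := hp.partner_le n
      have := hp.le_partner n
      have : ¬(a ≤ φ n ∧ φ n ≤ b) := fun h => hφB (hφn h)
      omega
  have h1 := Finset.card_le_card hsub
  have h2 := Finset.card_insert_le a (insert b ((unpaired y φ B).image φ))
  have h3 := Finset.card_insert_le b ((unpaired y φ B).image φ)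
  have h4 := Finset.card_image_le (s := unpaired y φ B) (f := φ)
  have h5 := hp.card_unpaired_le_one hB
  omega

theorem abs_sum_le_of_greedySet (hp : AdjacentPairing y φ) {B : Finset ℕ} (hB : GreedySet y B)
    {β : ℝ} (hβ : 0 ≤ β) (hle : ∀ k ∉ B, |y k| ≤ β) : |∑ n ∈ B, y n| ≤ β := by
  have h := hp.abs_sum_le_mul hβ (hp.card_unpaired_le_one hB) fun n hn => by
    rw [mem_unpaired] at hn
    simpa [hp.apply_partner] using hle (φ n) hn.2.1
  simpa using h

theorem beta_le (hp : AdjacentPairing y φ) {B : Finset ℕ} (hB : GreedySet y B) {β : ℝ}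
    (hβ : 0 ≤ β) (hle : ∀ k ∉ B, |y k| ≤ β) : beta y B ≤ ENNReal.ofReal (3 * β) :=
  iSup₂_le fun a b => ENNReal.ofReal_le_ofReal <| by
    have h := hp.abs_sum_le_mul hβ (hp.card_unpaired_Icc_sdiff_le_three hB a b) fun n hn =>
      hle n (Finset.mem_sdiff.1 (mem_unpaired.1 hn).1).2
    exact_mod_cast h

theorem greedyLim_zero (hp : AdjacentPairing y φ) (hy : Memc0 y) : GreedyLim y 0 := by
  intro ε hε
  obtain ⟨A, hA, hsmall⟩ := hy.exists_greedySet_forall_le (half_pos hε)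
  refine ⟨A, hA, fun B hB hAB => ?_⟩
  have := hp.abs_sum_le_of_greedySet hB (half_pos hε).le (hsmall B hAB)
  rw [oneStar, sub_zero]
  linarith

theorem memB0 (hp : AdjacentPairing y φ) (hy : Memc0 y) : MemB0 y := by
  refine ⟨hy, fun ε hε => ?_⟩
  have hε4 : 0 < ε / 4 := by positivity
  obtain ⟨A, hA, hsmall⟩ := hy.exists_greedySet_forall_le hε4
  refine ⟨A, hA, fun B hB hAB => (hp.beta_le hB hε4.le (hsmall B hAB)).trans_lt ?_⟩
  exact (ENNReal.ofReal_lt_ofReal_iff hε).2 (by linarith)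

theorem memB (hp : AdjacentPairing y φ) (hy : Memc0 y) : MemB y := by
  obtain ⟨C, hC⟩ := hy.abs.bddAbove_range
  have hC' : ∀ n, |y n| ≤ C := fun n => hC ⟨n, rfl⟩
  refine lt_of_le_of_lt (iSup₂_le fun B hB => hp.beta_le hB ((abs_nonneg _).trans (hC' 0))
    fun k _ => hC' k) ENNReal.ofReal_lt_top

theorem seriesLim_zero (hp : AdjacentPairing y φ) (hy : Memc0 y) : SeriesLim y 0 := by
  have hbound : ∀ m, |∑ n ∈ Finset.range m, y n| ≤ |y (m - 1)| := by
    intro m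
    have hsub : unpaired y φ (Finset.range m) ⊆ {m - 1} := by
      intro n hn
      rw [mem_unpaired, Finset.mem_range, Finset.mem_range] at hn
      have := hp.partner_le n
      rw [Finset.mem_singleton]
      omega
    calc |∑ n ∈ Finset.range m, y n| ≤ ∑ n ∈ unpaired y φ (Finset.range m), |y n| :=
          hp.abs_sum_le _
      _ ≤ ∑ n ∈ {m - 1}, |y n| :=
          Finset.sum_le_sum_of_subset_of_nonneg hsub fun _ _ _ => abs_nonneg _
      _ = |y (m - 1)| := Finset.sum_singleton _ _
  have hlim : Tendsto (fun m => |y (m - 1)|) atTop (nhds 0) := by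
    simpa using (hy.comp (tendsto_sub_atTop_nat 1)).abs
  exact squeeze_zero_norm hbound hlim

end AdjacentPairing

/-- `(0, …, 0, a o, -a o, a (o + 2), -a (o + 2), …)`, with `o` leading zeros. -/
noncomputable def pairUp (o : ℕ) (a : ℕ → ℝ) (n : ℕ) : ℝ :=
  if n < o then 0 else if Even (n - o) then a n else -a (n - 1)

def pairPartner (o n : ℕ) : ℕ :=
  if n < o then n else if Even (n - o) then n + 1 else n - 1

theorem abs_pairUp (o : ℕ) {a : ℕ → ℝ} (ha : ∀ n, 0 < a n) (n : ℕ) :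
    |pairUp o a n| = if n < o then 0 else a (n - (n - o) % 2) := by
  unfold pairUp
  split_ifs <;> simp_all [Nat.even_iff, abs_of_pos (ha _)]

theorem adjacentPairing_pairUp (o : ℕ) {a : ℕ → ℝ} (ha : ∀ n, 0 < a n)
    (ha' : Function.Injective a) : AdjacentPairing (pairUp o a) (pairPartner o) where
  involutive n := by
    unfold pairPartner
    split_ifs <;> simp_all [Nat.even_iff] <;> omega
  apply_partner n := by
    unfold pairUp pairPartner
    split_ifs <;> simp_all [Nat.even_iff] <;> omega
  partner_le n := by unfold pairPartner; split_ifs <;> omega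
  le_partner n := by unfold pairPartner; split_ifs <;> omega
  eq_or_eq_partner_of_abs_eq n m hn hnm := by
    rw [abs_pairUp o ha, abs_pairUp o ha] at hnm
    have hno : ¬n < o := fun h => hn (by simp [pairUp, h])
    have hmo : ¬m < o := fun h => by
      rw [if_pos h, if_neg hno] at hnm
      exact (ha _).ne hnm
    rw [if_neg hno, if_neg hmo] at hnm
    have := ha' hnm
    unfold pairPartner
    split_ifs <;> simp_all [Nat.even_iff] <;> omega

theorem memc0_pairUp {a : ℕ → ℝ} (ha : Memc0 a) (o : ℕ) : Memc0 (pairUp o a) := by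
  have hbound : ∀ n, ‖pairUp o a n‖ ≤ |a n| + |a (n - 1)| := by
    intro n
    unfold pairUp
    split_ifs <;> simp [abs_nonneg, add_nonneg]
  have hlim : Tendsto (fun n => |a n| + |a (n - 1)|) atTop (nhds 0) := by
    simpa using ha.abs.add (ha.comp (tendsto_sub_atTop_nat 1)).abs
  exact squeeze_zero_norm hbound hlim

/-- Backward differences, with `a (-1) = 0`. -/
noncomputable def delta (a : ℕ → ℝ) : ℕ → ℝ
  | 0 => a 0
  | n + 1 => a (n + 1) - a n

theorem sum_range_succ_delta (a : ℕ → ℝ) (N : ℕ) :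
    ∑ n ∈ Finset.range (N + 1), delta a n = a N := by
  induction N with
  | zero => simp [delta]
  | succ N ih => rw [Finset.sum_range_succ, ih, delta]; ring

theorem sum_range_delta_le {a : ℕ → ℝ} {C : ℝ} (hC : 0 ≤ C) (ha : ∀ n, a n ≤ C) (N : ℕ) :
    ∑ n ∈ Finset.range N, delta a n ≤ C := by
  cases N with
  | zero => simpa using hC
  | succ N => rw [sum_range_succ_delta]; exact ha N

theorem pairUp_zero_add_pairUp_one (a : ℕ → ℝ) : pairUp 0 a + pairUp 1 a = delta a := by
  funext n
  cases n with
  | zero => simp [pairUp, delta]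
  | succ n =>
    simp only [Pi.add_apply, pairUp, delta]
    rcases Nat.even_or_odd n with h | h
    · have : ¬Even (n + 1) := by simpa [Nat.even_add_one] using h
      simp [h, this]
      ring
    · have : Even (n + 1) := h.add_one
      simp [this, Nat.not_even_iff_odd.2 h]
      ring

def GreedySumsUnbounded (h : ℕ → ℝ) : Prop :=
  ∀ (A : Finset ℕ) (R : ℝ), ∃ B, GreedySet h B ∧ A ⊆ B ∧ R ≤ oneStar h B

theorem ofReal_oneStar_sub_le_beta {h : ℕ → ℝ} {C : ℝ}
    (hC : ∀ N, ∑ n ∈ Finset.range N, h n ≤ C) (B : Finset ℕ) :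
    ENNReal.ofReal (oneStar h B - C) ≤ beta h B := by
  set b := B.sup id
  have hsub : B ⊆ Finset.Icc 0 b := fun n hn =>
    Finset.mem_Icc.2 ⟨n.zero_le, Finset.le_sup (f := id) hn⟩
  have hsum : oneStar h (Finset.Icc 0 b \ B) = ∑ n ∈ Finset.range (b + 1), h n - oneStar h B := by
    rw [oneStar, oneStar, Finset.sum_sdiff_eq_sub hsub, Nat.range_succ_eq_Icc_zero]
  refine le_trans (ENNReal.ofReal_le_ofReal ?_) (le_iSup₂_of_le 0 b le_rfl)
  rw [hsum, abs_sub_comm]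
  have := hC (b + 1)
  linarith [le_abs_self (oneStar h B - ∑ n ∈ Finset.range (b + 1), h n)]

namespace GreedySumsUnbounded

variable {h : ℕ → ℝ}

theorem not_memA (hh : GreedySumsUnbounded h) : ¬MemA h := by
  rintro ⟨-, s, hs⟩
  obtain ⟨A, -, hA⟩ := hs 1 one_pos
  obtain ⟨B, hB, hAB, hsum⟩ := hh A (s + 1)
  have := hA B hB hAB
  linarith [le_abs_self (oneStar h B - s)]

theorem not_memB {C : ℝ} (hC : ∀ N, ∑ n ∈ Finset.range N, h n ≤ C)
    (hh : GreedySumsUnbounded h) : ¬MemB h := by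
  intro hB
  obtain ⟨B, hBg, -, hsum⟩ := hh ∅ ((BNorm h).toReal + 1 + C)
  have hle : ENNReal.ofReal ((BNorm h).toReal + 1) ≤ BNorm h :=
    (ENNReal.ofReal_le_ofReal (by linarith)).trans
      ((ofReal_oneStar_sub_le_beta hC B).trans (le_biSup (beta h) hBg))
  have := ENNReal.toReal_mono hB.ne hle
  rw [ENNReal.toReal_ofReal (by positivity)] at this
  linarith

theorem not_memB0 {C : ℝ} (hC : ∀ N, ∑ n ∈ Finset.range N, h n ≤ C)
    (hh : GreedySumsUnbounded h) : ¬MemB0 h := by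
  rintro ⟨-, hB0⟩
  obtain ⟨A, -, hA⟩ := hB0 1 one_pos
  obtain ⟨B, hB, hAB, hsum⟩ := hh A (1 + C)
  refine (hA B hB hAB).not_ge ((ENNReal.ofReal_le_ofReal ?_).trans
    (ofReal_oneStar_sub_le_beta hC B))
  linarith

end GreedySumsUnbounded

theorem odd_div_two_pow_inj {a b e f : ℕ}
    (h : ((2 * a + 1 : ℕ) : ℝ) / 2 ^ e = ((2 * b + 1 : ℕ) : ℝ) / 2 ^ f) : a = b ∧ e = f := by
  have key : (2 * a + 1) * 2 ^ f = (2 * b + 1) * 2 ^ e := by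
    rw [div_eq_div_iff (by positivity) (by positivity)] at h
    exact_mod_cast h
  wlog hef : e ≤ f generalizing a b e f
  · obtain ⟨hab, hef⟩ := this h.symm key.symm (by omega)
    exact ⟨hab.symm, hef.symm⟩
  obtain ⟨d, rfl⟩ := Nat.exists_eq_add_of_le hef
  rw [pow_add, mul_comm (2 ^ e), ← mul_assoc] at key
  have hd := Nat.eq_of_mul_eq_mul_right (pow_pos two_pos e) key
  cases d with
  | zero => omega
  | succ d =>
    rw [pow_succ, ← mul_assoc] at hd
    omega

theorem le_sum_range_two_pow_sub_one_inv (m : ℕ) :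
    (m : ℝ) / 4 ≤ ∑ k ∈ Finset.range (2 ^ m - 1), (2 * ((k : ℝ) + 2))⁻¹ := by
  have h := Finset.sum_condensed_le' (f := fun k : ℕ => ((k : ℝ))⁻¹)
    (fun i j hi hij => inv_anti₀ (by positivity) (by exact_mod_cast hij)) m
  rw [Finset.sum_Ico_eq_sum_range, show 2 ^ m + 1 - 2 = 2 ^ m - 1 by omega] at h
  have hterm : ∀ k : ℕ, 2 ^ k • ((2 ^ (k + 1) : ℕ) : ℝ)⁻¹ = 1 / 2 := by
    intro k
    rw [nsmul_eq_mul]; push_cast; rw [pow_succ]; field_simp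
  simp only [hterm, Finset.sum_const, Finset.card_range, nsmul_eq_mul] at h
  have hhalf : ∑ k ∈ Finset.range (2 ^ m - 1), (2 * ((k : ℝ) + 2))⁻¹
      = 2⁻¹ * ∑ k ∈ Finset.range (2 ^ m - 1), ((2 + k : ℕ) : ℝ)⁻¹ := by
    rw [Finset.mul_sum]
    refine Finset.sum_congr rfl fun k _ => ?_
    push_cast; rw [mul_inv, add_comm (k : ℝ)]
  rw [hhalf]
  linarith

/-- The `k`-th tooth of the sawtooth takes the values `(2j + 1) / toothDen k` for
`j = toothLen k, …, 1, 0` in turn, so it has height about `1 / (k + 1)` and tiny steps. Odd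
numerators over distinct powers of two make the sawtooth injective. -/
def toothDen (k : ℕ) : ℕ := 2 ^ (8 * k + 8)

theorem toothDen_pos (k : ℕ) : 0 < (toothDen k : ℝ) := by
  unfold toothDen; positivity

noncomputable def toothLen (k : ℕ) : ℕ := ⌊(toothDen k : ℝ) / (2 * (k + 1))⌋₊

noncomputable def toothStart : ℕ → ℕ
  | 0 => 0
  | k + 1 => toothStart k + toothLen k + 1

theorem toothStart_strictMono : StrictMono toothStart :=
  strictMono_nat_of_lt_succ fun k => by simp only [toothStart]; omega

theorem exists_lt_toothStart_succ (n : ℕ) : ∃ k, n < toothStart (k + 1) :=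
  ⟨n, (Nat.lt_succ_self n).trans_le (toothStart_strictMono.id_le _)⟩

noncomputable def toothOf (n : ℕ) : ℕ := Nat.find (exists_lt_toothStart_succ n)

theorem toothOf_eq_iff {n k : ℕ} : toothOf n = k ↔ toothStart k ≤ n ∧ n < toothStart (k + 1) := by
  rw [toothOf, Nat.find_eq_iff]
  refine ⟨fun ⟨hk, hmin⟩ => ⟨?_, hk⟩, fun ⟨hkn, hk⟩ => ⟨hk, fun j hj => ?_⟩⟩
  · cases k with
    | zero => exact Nat.zero_le n
    | succ k => exact not_lt.1 (hmin k k.lt_succ_self)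
  · exact not_lt.2 ((toothStart_strictMono.monotone (by omega : j + 1 ≤ k)).trans hkn)

theorem toothStart_toothOf_le (n : ℕ) : toothStart (toothOf n) ≤ n :=
  (toothOf_eq_iff.1 rfl).1

theorem lt_toothStart_toothOf_succ (n : ℕ) : n < toothStart (toothOf n + 1) :=
  (toothOf_eq_iff.1 rfl).2

theorem sub_toothStart_toothOf_le (n : ℕ) : n - toothStart (toothOf n) ≤ toothLen (toothOf n) := by
  have := lt_toothStart_toothOf_succ n
  simp only [toothStart] at this
  omega

theorem toothOf_toothStart_add {k i : ℕ} (hi : i ≤ toothLen k) : toothOf (toothStart k + i) = k :=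
  toothOf_eq_iff.2 ⟨by omega, by simp only [toothStart]; omega⟩

theorem le_toothOf {n K : ℕ} (hn : toothStart K ≤ n) : K ≤ toothOf n := by
  by_contra! h
  have := toothStart_strictMono.monotone (Nat.succ_le_of_lt h)
  linarith [lt_toothStart_toothOf_succ n]

noncomputable def sawtooth (n : ℕ) : ℝ :=
  ((2 * (toothLen (toothOf n) - (n - toothStart (toothOf n))) + 1 : ℕ) : ℝ) / toothDen (toothOf n)

theorem sawtooth_toothStart_add {k i : ℕ} (hi : i ≤ toothLen k) :
    sawtooth (toothStart k + i) = ((2 * (toothLen k - i) + 1 : ℕ) : ℝ) / toothDen k := by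
  rw [sawtooth, toothOf_toothStart_add hi, Nat.add_sub_cancel_left]

theorem sawtooth_pos (n : ℕ) : 0 < sawtooth n := by
  unfold sawtooth toothDen; positivity

theorem sawtooth_injective : Function.Injective sawtooth := by
  intro n m h
  have hn := sub_toothStart_toothOf_le n
  have hm := sub_toothStart_toothOf_le m
  have hn' := toothStart_toothOf_le n
  have hm' := toothStart_toothOf_le m
  simp only [sawtooth, toothDen, Nat.cast_pow, Nat.cast_ofNat] at h
  obtain ⟨hj, hk⟩ := odd_div_two_pow_inj h
  have hk : toothOf n = toothOf m := by omega
  rw [hk] at hj hn hn'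
  omega

theorem toothLen_le (k : ℕ) : 2 * (toothLen k : ℝ) * (k + 1) ≤ toothDen k := by
  have := Nat.floor_le (a := (toothDen k : ℝ) / (2 * (k + 1))) (by positivity)
  rw [le_div_iff₀ (by positivity)] at this
  rw [toothLen]
  linarith

theorem toothDen_lt (k : ℕ) : (toothDen k : ℝ) < 2 * (toothLen k + 1) * (k + 1) := by
  have := Nat.lt_floor_add_one ((toothDen k : ℝ) / (2 * (k + 1)))
  rw [div_lt_iff₀ (by positivity)] at this
  rw [toothLen]
  linarith

theorem four_mul_le_toothDen (k : ℕ) : 4 * ((k : ℝ) + 2) ≤ toothDen k := by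
  have h : 4 * (k + 2) ≤ toothDen k := by
    have := Nat.lt_two_pow_self (n := k)
    have : 2 ^ k ≤ 2 ^ (8 * k + 5) := Nat.pow_le_pow_right two_pos (by omega)
    rw [toothDen, show 8 * k + 8 = (8 * k + 5) + 3 by ring, pow_add]
    omega
  exact_mod_cast h

theorem two_mul_toothDen_le {K k : ℕ} (h : K < k) : 2 * (toothDen K : ℝ) ≤ toothDen k := by
  have : 2 * toothDen K ≤ toothDen k := by
    rw [toothDen, toothDen, ← pow_succ']
    exact Nat.pow_le_pow_right two_pos (by omega)
  exact_mod_cast this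

theorem sawtooth_toothStart_add_le {k i : ℕ} (hi : i ≤ toothLen k) :
    sawtooth (toothStart k + i) ≤ 2 / (k + 1) := by
  rw [sawtooth_toothStart_add hi,
    div_le_div_iff₀ (toothDen_pos k) (by positivity)]
  have hnum : ((2 * (toothLen k - i) + 1 : ℕ) : ℝ) ≤ 2 * toothLen k + 1 := by
    exact_mod_cast (by omega : 2 * (toothLen k - i) + 1 ≤ 2 * toothLen k + 1)
  nlinarith [toothLen_le k, four_mul_le_toothDen k]

theorem sawtooth_le (n : ℕ) : sawtooth n ≤ 2 / (toothOf n + 1) := by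
  have h := sawtooth_toothStart_add_le (sub_toothStart_toothOf_le n)
  rwa [Nat.add_sub_of_le (toothStart_toothOf_le n)] at h

theorem sawtooth_le_two (n : ℕ) : sawtooth n ≤ 2 :=
  (sawtooth_le n).trans (div_le_self zero_le_two (by simp))

theorem tendsto_sawtooth : Tendsto sawtooth atTop (nhds 0) := by
  have htooth : Tendsto toothOf atTop atTop :=
    tendsto_atTop_atTop.2 fun K => ⟨toothStart K, fun n hn => le_toothOf hn⟩
  have hlim : Tendsto (fun n => 2 / ((toothOf n : ℝ) + 1)) atTop (nhds 0) :=
    (tendsto_const_div_atTop_nhds_zero_nat 2).comp (tendsto_add_atTop_nat 1 |>.comp htooth)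
      |>.congr fun n => by simp
  exact squeeze_zero (fun n => (sawtooth_pos n).le) sawtooth_le hlim

theorem delta_sawtooth_step {k i : ℕ} (hi : i < toothLen k) :
    delta sawtooth (toothStart k + i + 1) = -(2 / toothDen k) := by
  rw [delta, add_assoc, sawtooth_toothStart_add (Nat.succ_le_of_lt hi),
    sawtooth_toothStart_add hi.le]
  push_cast [Nat.cast_sub hi, Nat.cast_sub hi.le]
  ring

theorem delta_sawtooth_toothStart_succ (k : ℕ) :
    delta sawtooth (toothStart (k + 1)) =
      (2 * toothLen (k + 1) + 1) / toothDen (k + 1) - 1 / toothDen k := by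
  have h0 := sawtooth_toothStart_add (k := k + 1) (Nat.zero_le _)
  have h1 := sawtooth_toothStart_add (le_refl (toothLen k))
  rw [add_zero] at h0
  rw [toothStart, delta, ← toothStart, h0, h1]
  simp

theorem le_delta_sawtooth_toothStart_succ (k : ℕ) :
    (2 * ((k : ℝ) + 2))⁻¹ ≤ delta sawtooth (toothStart (k + 1)) := by
  rw [delta_sawtooth_toothStart_succ]
  have hlt := toothDen_lt (k + 1)
  have hle := four_mul_le_toothDen k
  have hden := two_mul_toothDen_le k.lt_succ_self
  push_cast at hlt
  have hx := toothDen_pos k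
  have hy := toothDen_pos (k + 1)
  generalize (toothDen k : ℝ) = x at *
  generalize (toothDen (k + 1) : ℝ) = y at *
  generalize (toothLen (k + 1) : ℝ) = L at *
  have h1 : ((k : ℝ) + 2)⁻¹ ≤ (2 * L + 2) / y := by
    rw [inv_eq_one_div, div_le_div_iff₀ (by positivity) hy]
    linarith
  have h2 : y⁻¹ ≤ x⁻¹ / 2 := by
    rw [← inv_mul_eq_div, ← mul_inv]
    exact inv_anti₀ (by positivity) (by linarith)
  have h3 : x⁻¹ ≤ ((k : ℝ) + 2)⁻¹ / 4 := by
    rw [← inv_mul_eq_div, ← mul_inv]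
    exact inv_anti₀ (by positivity) (by linarith)
  have e1 : (2 * L + 1) / y = (2 * L + 2) / y - y⁻¹ := by field_simp; ring
  rw [e1, mul_inv, one_div]
  linarith [inv_pos.2 (by positivity : (0 : ℝ) < k + 2)]

theorem delta_sawtooth_toothStart_pos (k : ℕ) : 0 < delta sawtooth (toothStart k) := by
  cases k with
  | zero => exact sawtooth_pos 0
  | succ k =>
    exact lt_of_lt_of_le (by positivity) (le_delta_sawtooth_toothStart_succ k)

theorem exists_step_of_delta_sawtooth_nonpos {n : ℕ} (h : delta sawtooth n ≤ 0) :
    ∃ k i, i < toothLen k ∧ n = toothStart k + i + 1 := by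
  have hi := sub_toothStart_toothOf_le n
  have hkn := toothStart_toothOf_le n
  rcases Nat.eq_zero_or_pos (n - toothStart (toothOf n)) with h0 | hpos
  · have hn : n = toothStart (toothOf n) := by omega
    rw [hn] at h
    exact absurd h (not_le.2 (delta_sawtooth_toothStart_pos _))
  · exact ⟨toothOf n, n - toothStart (toothOf n) - 1, by omega, by omega⟩

theorem lt_toothStart_of_delta_sawtooth_nonpos {K n : ℕ} (h : delta sawtooth n ≤ 0)
    (hn : (toothDen K : ℝ)⁻¹ < |delta sawtooth n|) : n < toothStart (K + 1) := by
  obtain ⟨k, i, hi, rfl⟩ := exists_step_of_delta_sawtooth_nonpos h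
  rw [delta_sawtooth_step hi, abs_neg, abs_of_pos (div_pos two_pos (toothDen_pos k))] at hn
  have hkK : k ≤ K := by
    by_contra! hKk
    have hle : 2 / (toothDen k : ℝ) ≤ 2 / (2 * toothDen K) :=
      div_le_div_of_nonneg_left zero_le_two (by linarith [toothDen_pos K]) (two_mul_toothDen_le hKk)
    rw [div_mul_cancel_left₀ two_ne_zero] at hle
    linarith
  calc toothStart k + i + 1 < toothStart (k + 1) := by simp only [toothStart]; omega
    _ ≤ toothStart (K + 1) := toothStart_strictMono.monotone (by omega)

theorem sum_negPart_delta_sawtooth_le (K : ℕ) :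
    ∑ n ∈ Finset.range (toothStart K), (delta sawtooth n)⁻ ≤ K := by
  induction K with
  | zero => simp [toothStart]
  | succ K ih =>
    have hblock : ∑ i ∈ Finset.range (toothLen K + 1), (delta sawtooth (toothStart K + i))⁻
        = toothLen K * (2 / toothDen K) := by
      rw [Finset.sum_range_succ', add_zero,
        negPart_eq_zero.2 (delta_sawtooth_toothStart_pos K).le, add_zero]
      rw [Finset.sum_congr rfl fun i hi => by
        rw [← add_assoc, delta_sawtooth_step (Finset.mem_range.1 hi), negPart_neg,
          posPart_eq_self.2 (div_pos two_pos (toothDen_pos K)).le]]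
      simp
    have hlen : (toothLen K : ℝ) * (2 / toothDen K) ≤ 1 := by
      rw [mul_div_assoc', div_le_one (toothDen_pos K)]
      nlinarith [toothLen_le K, (Nat.cast_nonneg (toothLen K) : (0 : ℝ) ≤ _)]
    rw [toothStart, add_assoc, Finset.sum_range_add, hblock]
    push_cast
    linarith

theorem le_sum_posPart_delta_sawtooth (K : ℕ) {B : Finset ℕ}
    (hB : ∀ n, (toothDen K : ℝ)⁻¹ < |delta sawtooth n| → n ∈ B) :
    (8 * K + 6 : ℝ) / 4 ≤ ∑ n ∈ B, (delta sawtooth n)⁺ := by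
  set m := 8 * K + 6
  set rises := (Finset.range (2 ^ m - 1)).image (fun k => toothStart (k + 1))
  have hsub : rises ⊆ B := by
    intro n hn
    obtain ⟨k, hk, rfl⟩ := Finset.mem_image.1 hn
    have hk2 : 2 * (k + 2) < toothDen K := by
      have := Nat.one_le_two_pow (n := m)
      rw [Finset.mem_range] at hk
      rw [toothDen, show 8 * K + 8 = m + 2 by omega, pow_add]
      omega
    refine hB _ (lt_of_lt_of_le ?_ ((le_delta_sawtooth_toothStart_succ k).trans (le_abs_self _)))
    exact inv_strictAnti₀ (by positivity) (by exact_mod_cast hk2)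
  calc (8 * K + 6 : ℝ) / 4 ≤ ∑ k ∈ Finset.range (2 ^ m - 1), (2 * ((k : ℝ) + 2))⁻¹ := by
        exact_mod_cast le_sum_range_two_pow_sub_one_inv m
    _ ≤ ∑ k ∈ Finset.range (2 ^ m - 1), (delta sawtooth (toothStart (k + 1)))⁺ :=
        Finset.sum_le_sum fun k _ => (le_delta_sawtooth_toothStart_succ k).trans (le_posPart _)
    _ = ∑ n ∈ rises, (delta sawtooth n)⁺ := by
        rw [Finset.sum_image fun _ _ _ _ hab =>
          Nat.succ_injective (toothStart_strictMono.injective hab)]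
    _ ≤ ∑ n ∈ B, (delta sawtooth n)⁺ :=
        Finset.sum_le_sum_of_subset_of_nonneg hsub fun _ _ _ => posPart_nonneg _

theorem sum_negPart_delta_sawtooth_le_of_forall_lt (K : ℕ) {B : Finset ℕ}
    (hB : ∀ n ∈ B, (toothDen K : ℝ)⁻¹ < |delta sawtooth n|) :
    ∑ n ∈ B, (delta sawtooth n)⁻ ≤ K + 1 := by
  have hsub : B.filter (fun n => (delta sawtooth n)⁻ ≠ 0) ⊆ Finset.range (toothStart (K + 1)) := by
    intro n hn
    rw [Finset.mem_filter, ne_eq, negPart_eq_zero, not_le] at hn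
    exact Finset.mem_range.2 (lt_toothStart_of_delta_sawtooth_nonpos hn.2.le (hB n hn.1))
  calc ∑ n ∈ B, (delta sawtooth n)⁻
      = ∑ n ∈ B.filter (fun n => (delta sawtooth n)⁻ ≠ 0), (delta sawtooth n)⁻ :=
        (Finset.sum_filter_ne_zero _).symm
    _ ≤ ∑ n ∈ Finset.range (toothStart (K + 1)), (delta sawtooth n)⁻ :=
        Finset.sum_le_sum_of_subset_of_nonneg hsub fun _ _ _ => negPart_nonneg _
    _ ≤ K + 1 := by exact_mod_cast sum_negPart_delta_sawtooth_le (K + 1)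

/-- Above the threshold `1 / toothDen K` lie the rises of the first `2 ^ (8K+6) - 1` teeth, of
harmonic total mass, but the descents of the teeth `k ≤ K` only. -/
theorem le_sum_delta_sawtooth (K : ℕ) {B : Finset ℕ}
    (hB : ∀ n, n ∈ B ↔ (toothDen K : ℝ)⁻¹ < |delta sawtooth n|) :
    (K : ℝ) ≤ ∑ n ∈ B, delta sawtooth n := by
  have hrises := le_sum_posPart_delta_sawtooth K fun n => (hB n).2
  have hdescents := sum_negPart_delta_sawtooth_le_of_forall_lt K fun n => (hB n).1
  have hsplit : ∑ n ∈ B, delta sawtooth n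
      = ∑ n ∈ B, (delta sawtooth n)⁺ - ∑ n ∈ B, (delta sawtooth n)⁻ := by
    rw [← Finset.sum_sub_distrib]
    simp only [posPart_sub_negPart]
  linarith

theorem delta_sawtooth_ne_zero (n : ℕ) : delta sawtooth n ≠ 0 := by
  cases n with
  | zero => exact (sawtooth_pos 0).ne'
  | succ n => exact sub_ne_zero.2 (sawtooth_injective.ne n.succ_ne_self)

theorem memc0_delta_sawtooth : Memc0 (delta sawtooth) := by
  rw [← pairUp_zero_add_pairUp_one]
  have h := (memc0_pairUp tendsto_sawtooth 0).add (memc0_pairUp tendsto_sawtooth 1)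
  rwa [add_zero] at h

theorem greedySumsUnbounded_delta_sawtooth : GreedySumsUnbounded (delta sawtooth) := by
  intro A R
  have hden : Tendsto (fun K => (toothDen K : ℝ)⁻¹) atTop (nhds 0) :=
    tendsto_inv_atTop_zero.comp <| tendsto_atTop_mono
      (fun K => by linarith [four_mul_le_toothDen K]) tendsto_natCast_atTop_atTop
  obtain ⟨K, hKA, hKR⟩ := ((hden.eventually (Filter.eventually_all_finset A |>.2 fun n _ =>
    eventually_lt_nhds (abs_pos.2 (delta_sawtooth_ne_zero n)))).and
    (eventually_ge_atTop ⌈R⌉₊)).exists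
  obtain ⟨B, hB, hmem⟩ := memc0_delta_sawtooth.exists_greedySet (inv_pos.2 (toothDen_pos K))
  exact ⟨B, hB, fun n hn => (hmem n).2 (hKA n hn),
    (Nat.ceil_le.1 hKR).trans (le_sum_delta_sawtooth K hmem)⟩

/-- none of `𝔹₀`, `𝔹`, `𝔸`, `𝔸 ∩ 𝒔`, `𝔹 ∩ 𝒔`, `𝔸 ∩ 𝔹 ∩ 𝒔` is closed
under addition of sequences. -/
theorem stmt_17 :
    (∃ f g : ℕ → ℝ, MemB0 f ∧ MemB0 g ∧ ¬ MemB0 (f + g)) ∧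
    (∃ f g : ℕ → ℝ, MemB f ∧ MemB g ∧ ¬ MemB (f + g)) ∧
    (∃ f g : ℕ → ℝ, MemA f ∧ MemA g ∧ ¬ MemA (f + g)) ∧
    (∃ f g : ℕ → ℝ, (MemA f ∧ MemSeries f) ∧ (MemA g ∧ MemSeries g) ∧
      ¬ (MemA (f + g) ∧ MemSeries (f + g))) ∧
    (∃ f g : ℕ → ℝ, (MemB f ∧ MemSeries f) ∧ (MemB g ∧ MemSeries g) ∧
      ¬ (MemB (f + g) ∧ MemSeries (f + g))) ∧
    (∃ f g : ℕ → ℝ, (MemA f ∧ MemB f ∧ MemSeries f) ∧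
      (MemA g ∧ MemB g ∧ MemSeries g) ∧
      ¬ (MemA (f + g) ∧ MemB (f + g) ∧ MemSeries (f + g))) := by
  set f := pairUp 0 sawtooth
  set g := pairUp 1 sawtooth
  have hf := adjacentPairing_pairUp 0 sawtooth_pos sawtooth_injective
  have hg := adjacentPairing_pairUp 1 sawtooth_pos sawtooth_injective
  have hf0 : Memc0 f := memc0_pairUp tendsto_sawtooth 0
  have hg0 : Memc0 g := memc0_pairUp tendsto_sawtooth 1
  have hsum : f + g = delta sawtooth := pairUp_zero_add_pairUp_one sawtooth
  have hunb : GreedySumsUnbounded (f + g) := hsum ▸ greedySumsUnbounded_delta_sawtooth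
  have hC : ∀ N, ∑ n ∈ Finset.range N, (f + g) n ≤ 2 :=
    hsum ▸ sum_range_delta_le zero_le_two sawtooth_le_two
  have hA : MemA f ∧ MemA g := ⟨⟨hf0, 0, hf.greedyLim_zero hf0⟩, ⟨hg0, 0, hg.greedyLim_zero hg0⟩⟩
  have hB : MemB f ∧ MemB g := ⟨hf.memB hf0, hg.memB hg0⟩
  have hS : MemSeries f ∧ MemSeries g := ⟨⟨0, hf.seriesLim_zero hf0⟩, ⟨0, hg.seriesLim_zero hg0⟩⟩
  exact ⟨⟨f, g, hf.memB0 hf0, hg.memB0 hg0, hunb.not_memB0 hC⟩,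
    ⟨f, g, hB.1, hB.2, hunb.not_memB hC⟩,
    ⟨f, g, hA.1, hA.2, hunb.not_memA⟩,
    ⟨f, g, ⟨hA.1, hS.1⟩, ⟨hA.2, hS.2⟩, fun h => hunb.not_memA h.1⟩,
    ⟨f, g, ⟨hB.1, hS.1⟩, ⟨hB.2, hS.2⟩, fun h => hunb.not_memB hC h.1⟩,
    ⟨f, g, ⟨hA.1, hB.1, hS.1⟩, ⟨hA.2, hB.2, hS.2⟩, fun h => hunb.not_memA h.1⟩⟩
end

section
/- Let f ∈ 𝔸 and let A be a greedy set of f. Then f − S_A(f) ∈ 𝔸 and σ_g(f − S_A(f)) = σ_g(f) − 𝟙*_A(f). Moreover, the net (‖f − S_A(f)‖_𝔸)_{A∈𝒢(f)} tends to 0: for every ε > 0 there is A ∈ 𝒢(f) such that ‖f − S_B(f)‖_𝔸 < ε for every B ∈ 𝒢(f) with A ⊆ B. -/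
open Filter ENNReal
open scoped Classical

section Aux

lemma gdef (A : Finset ℕ) (f : ℕ → ℝ) (n : ℕ) :
    (f - proj A f) n = if n ∈ A then 0 else f n := by
  simp only [Pi.sub_apply, proj]
  split <;> simp

lemma greedy_union {f : ℕ → ℝ} {A B : Finset ℕ} (hA : GreedySet f A) (hB : GreedySet f B) :
    GreedySet f (A ∪ B) := by
  intro n hn k hk
  simp only [Finset.mem_union, not_or] at hn hk
  rcases hn with h | h
  · exact hA n h k hk.1
  · exact hB n h k hk.2

/-- If `B` is greedy for `f` and `A ⊆ B`, then `B \ A` is greedy for `f - proj A f`. -/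
lemma greedy_sdiff {f : ℕ → ℝ} {A B : Finset ℕ} (hB : GreedySet f B) (hAB : A ⊆ B) :
    GreedySet (f - proj A f) (B \ A) := by
  intro n hn k hk
  simp only [Finset.mem_sdiff, not_and, not_not] at hn hk
  rw [gdef A f k, gdef A f n, if_neg hn.2]
  by_cases hkA : k ∈ A
  · rw [if_pos hkA]; simp
  · rw [if_neg hkA]
    have hkB : k ∉ B := fun h => hkA (hk h)
    exact hB n hn.1 k hkB

/-- If `C` is greedy for `g = f - proj A f`, so is `C \ A`. -/
lemma greedy_sdiff_self {f : ℕ → ℝ} {A C : Finset ℕ} (hC : GreedySet (f - proj A f) C) :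
    GreedySet (f - proj A f) (C \ A) := by
  intro n hn k hk
  simp only [Finset.mem_sdiff, not_and, not_not] at hn hk
  by_cases hkA : k ∈ A
  · rw [gdef, if_pos hkA]; simp
  · have hkC : k ∉ C := fun h => hkA (hk h)
    exact hC n hn.1 k hkC

/-- If `A` is greedy for `f`, `C` greedy for `f - proj A f`, disjoint from `A`,
then `A ∪ C` is greedy for `f`. -/
lemma greedy_union_proj {f : ℕ → ℝ} {A C : Finset ℕ} (hA : GreedySet f A)
    (hC : GreedySet (f - proj A f) C) (hd : Disjoint A C) :
    GreedySet f (A ∪ C) := by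
  intro n hn k hk
  simp only [Finset.mem_union, not_or] at hn hk
  rcases hn with h | h
  · exact hA n h k hk.1
  · have hnA : n ∉ A := Finset.disjoint_right.mp hd h
    have := hC n h k hk.2
    rwa [gdef A f k, gdef A f n, if_neg hnA, if_neg hk.1] at this

lemma oneStar_sdiff (f : ℕ → ℝ) (A C : Finset ℕ) :
    oneStar (f - proj A f) (C \ A) = oneStar (f - proj A f) C := by
  unfold oneStar
  apply Finset.sum_subset (Finset.sdiff_subset)
  intro n hn hn'
  have hnA : n ∈ A := by
    by_contra h
    exact hn' (Finset.mem_sdiff.mpr ⟨hn, h⟩)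
  rw [gdef, if_pos hnA]

lemma oneStar_union {f : ℕ → ℝ} {A C : Finset ℕ} (hd : Disjoint A C) :
    oneStar f (A ∪ C) = oneStar f A + oneStar (f - proj A f) C := by
  unfold oneStar
  rw [Finset.sum_union hd]
  congr 1
  apply Finset.sum_congr rfl
  intro n hn
  rw [gdef, if_neg (Finset.disjoint_right.mp hd hn)]

lemma greedyLim_unique {f : ℕ → ℝ} {s t : ℝ} (hs : GreedyLim f s) (ht : GreedyLim f t) :
    s = t := by
  by_contra h
  have hd : 0 < |s - t| := abs_sub_pos.mpr h
  obtain ⟨A, hA, hAs⟩ := hs (|s - t| / 2) (by positivity)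
  obtain ⟨B, hB, hBs⟩ := ht (|s - t| / 2) (by positivity)
  have h1 := hAs (A ∪ B) (greedy_union hA hB) Finset.subset_union_left
  have h2 := hBs (A ∪ B) (greedy_union hA hB) Finset.subset_union_right
  have h3 : |s - t| ≤ |s - oneStar f (A ∪ B)| + |oneStar f (A ∪ B) - t| :=
    abs_sub_le s (oneStar f (A ∪ B)) t
  rw [abs_sub_comm s (oneStar f (A ∪ B))] at h3
  linarith

lemma sigmaG_eq {f : ℕ → ℝ} {s : ℝ} (h : GreedyLim f s) : sigmaG f = s := by
  have hex : ∃ s, GreedyLim f s := ⟨s, h⟩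
  rw [sigmaG, dif_pos hex]
  exact greedyLim_unique hex.choose_spec h

lemma greedyLim_sigmaG {f : ℕ → ℝ} (h : ∃ s, GreedyLim f s) : GreedyLim f (sigmaG f) := by
  rw [sigmaG, dif_pos h]
  exact h.choose_spec

lemma memc0_sub {f : ℕ → ℝ} (hf : Memc0 f) (A : Finset ℕ) : Memc0 (f - proj A f) := by
  apply hf.congr'
  filter_upwards [Filter.eventually_gt_atTop (A.sup id)] with n hn
  have hnA : n ∉ A := fun h => absurd (Finset.le_sup (f := id) h) (not_le.mpr hn)
  rw [gdef, if_neg hnA]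

lemma greedyLim_sub {f : ℕ → ℝ} {s : ℝ} (hs : GreedyLim f s) {A : Finset ℕ}
    (hA : GreedySet f A) : GreedyLim (f - proj A f) (s - oneStar f A) := by
  intro ε hε
  obtain ⟨A₀, hA₀, hspec⟩ := hs ε hε
  refine ⟨(A₀ ∪ A) \ A, greedy_sdiff (greedy_union hA₀ hA) Finset.subset_union_right, ?_⟩
  intro C hC hsub
  have hC' : GreedySet (f - proj A f) (C \ A) := greedy_sdiff_self hC
  have hd : Disjoint A (C \ A) := Finset.disjoint_sdiff
  have hBg : GreedySet f (A ∪ (C \ A)) := greedy_union_proj hA hC' hd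
  have hsupA₀ : A₀ ⊆ A ∪ (C \ A) := by
    intro x hx
    by_cases hxA : x ∈ A
    · exact Finset.mem_union_left _ hxA
    · have hx1 : x ∈ (A₀ ∪ A) \ A := Finset.mem_sdiff.mpr ⟨Finset.mem_union_left _ hx, hxA⟩
      exact Finset.mem_union_right _ (Finset.mem_sdiff.mpr ⟨hsub hx1, hxA⟩)
  have h1 := hspec (A ∪ (C \ A)) hBg hsupA₀
  rw [oneStar_union hd] at h1
  rw [← oneStar_sdiff]
  have heq : oneStar f A + oneStar (f - proj A f) (C \ A) - s
      = oneStar (f - proj A f) (C \ A) - (s - oneStar f A) := by ring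
  rwa [heq] at h1

end Aux

/-- if `f ∈ 𝔸` and `A ∈ 𝒢(f)` then `f − S_A(f) ∈ 𝔸` with
`σ_g(f − S_A(f)) = σ_g(f) − 𝟙*_A(f)`; moreover the net `(‖f − S_A(f)‖_𝔸)_{A ∈ 𝒢(f)}`
tends to `0`. -/
theorem stmt_18 (f : ℕ → ℝ) (hf : MemA f) :
    (∀ A : Finset ℕ, GreedySet f A →
      MemA (f - proj A f) ∧ sigmaG (f - proj A f) = sigmaG f - oneStar f A) ∧
    ∀ ε : ℝ, 0 < ε → ∃ A : Finset ℕ, GreedySet f A ∧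
      ∀ B : Finset ℕ, GreedySet f B → A ⊆ B →
        ANorm (f - proj B f) < ENNReal.ofReal ε := by
  have hs : GreedyLim f (sigmaG f) := greedyLim_sigmaG hf.2
  constructor
  · intro A hA
    have hlim := greedyLim_sub hs hA
    exact ⟨⟨memc0_sub hf.1 A, ⟨_, hlim⟩⟩, sigmaG_eq hlim⟩
  · intro ε hε
    obtain ⟨A₀, hA₀, hspec⟩ := hs (ε / 4) (by positivity)
    refine ⟨A₀, hA₀, ?_⟩
    intro B hB hsub
    have hsg : sigmaG (f - proj B f) = sigmaG f - oneStar f B :=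
      sigmaG_eq (greedyLim_sub hs hB)
    have hbound : ANorm (f - proj B f) ≤ ENNReal.ofReal (ε / 2) := by
      rw [ANorm]
      apply iSup_le; intro C; apply iSup_le; intro hC
      apply ENNReal.ofReal_le_ofReal
      have hC' : GreedySet (f - proj B f) (C \ B) := greedy_sdiff_self hC
      have hd : Disjoint B (C \ B) := Finset.disjoint_sdiff
      have hBg : GreedySet f (B ∪ (C \ B)) := greedy_union_proj hB hC' hd
      have h1 := hspec (B ∪ (C \ B)) hBg (hsub.trans Finset.subset_union_left)
      rw [oneStar_union hd] at h1
      have heq : sigmaG (f - proj B f) - oneStar (f - proj B f) C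
          = -(oneStar f B + oneStar (f - proj B f) (C \ B) - sigmaG f) := by
        rw [hsg, ← oneStar_sdiff f B C]; ring
      rw [heq, abs_neg]
      linarith
    refine lt_of_le_of_lt hbound ?_
    rw [ENNReal.ofReal_lt_ofReal_iff hε]
    linarith
end
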